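/- arXiv:2509.08324 — 11 statements merged into one kernel-verified Lean document; each statement's English description precedes it below -/
import Mathlib

section
/- Let c1, c2 > 0, p ∈ (0,1) and q > 1, and let V : [0,∞) → ℝ be a nonnegative differentiable function such that V′(t) ≤ −c1·V(t)^p − c2·V(t)^q for every t ≥ 0. Then V(t) = 0 for all t ≥ T, where T = 1/(c1(1−p)) + 1/(c2(q−1)). -/
/-!
For `r ≠ 1` and `V > 0`, the inequality `V' ≤ -c V ^ r` means that
`V ^ (1 - r) / (1 - r) + c t` is nonincreasing. With `r = q > 1` this bounds the time `V` can
stay above `1` by `1 / (c₂ (q - 1))`, whatever `V 0` is; with `r = p < 1` it bounds the time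
`V` can stay positive after dropping to `1` by `1 / (c₁ (1 - p))`.
-/

open Set

section RpowLyapunov

variable {V : ℝ → ℝ} {a b c r : ℝ}

lemma hasDerivAt_rpow_div_add_mul {V' u : ℝ} (hr : r ≠ 1) (hV : HasDerivAt V V' u)
    (hVu : 0 < V u) :
    HasDerivAt (fun t => V t ^ (1 - r) / (1 - r) + c * t) (V u ^ (-r) * V' + c) u := by
  have hr' : 1 - r ≠ 0 := sub_ne_zero.2 hr.symm
  refine (((hV.rpow_const (Or.inl hVu.ne')).div_const (1 - r)).add
    ((hasDerivAt_id u).const_mul c)).congr_deriv ?_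
  rw [sub_sub_cancel_left]
  field_simp

lemma antitoneOn_rpow_div_add_mul (hr : r ≠ 1) (hpos : ∀ u ∈ Icc a b, 0 < V u)
    (hdiff : ∀ u ∈ Icc a b, DifferentiableAt ℝ V u)
    (hV' : ∀ u ∈ Ioo a b, deriv V u ≤ -c * V u ^ r) :
    AntitoneOn (fun t => V t ^ (1 - r) / (1 - r) + c * t) (Icc a b) := by
  have hg : ∀ u ∈ Icc a b, HasDerivAt (fun t => V t ^ (1 - r) / (1 - r) + c * t)
      (V u ^ (-r) * deriv V u + c) u := fun u hu =>
    hasDerivAt_rpow_div_add_mul hr (hdiff u hu).hasDerivAt (hpos u hu)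
  refine antitoneOn_of_hasDerivWithinAt_nonpos (convex_Icc a b)
    (fun u hu => (hg u hu).continuousAt.continuousWithinAt)
    (fun u hu => (hg u (interior_subset hu)).hasDerivWithinAt) fun u hu => ?_
  rw [interior_Icc] at hu
  have hVu := hpos u (Ioo_subset_Icc_self hu)
  calc V u ^ (-r) * deriv V u + c ≤ V u ^ (-r) * (-c * V u ^ r) + c := by
        gcongr
        exact hV' u hu
    _ = 0 := by
        rw [Real.rpow_neg hVu.le]
        field_simp
        ring

lemma sub_lt_of_deriv_le_neg_mul_rpow_of_lt_one (hc : 0 < c) (hr : r < 1) (hab : a ≤ b)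
    (hpos : ∀ u ∈ Icc a b, 0 < V u) (hdiff : ∀ u ∈ Icc a b, DifferentiableAt ℝ V u)
    (hV' : ∀ u ∈ Ioo a b, deriv V u ≤ -c * V u ^ r) (hVa : V a ≤ 1) :
    b - a < 1 / (c * (1 - r)) := by
  have hr' : 0 < 1 - r := sub_pos.2 hr
  have hmono := antitoneOn_rpow_div_add_mul hr.ne hpos hdiff hV'
    (left_mem_Icc.2 hab) (right_mem_Icc.2 hab) hab
  have hVb : 0 < V b ^ (1 - r) := Real.rpow_pos_of_pos (hpos b (right_mem_Icc.2 hab)) _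
  have hVa' : V a ^ (1 - r) ≤ 1 :=
    Real.rpow_le_one (hpos a (left_mem_Icc.2 hab)).le hVa hr'.le
  rw [lt_div_iff₀ (by positivity)]
  simp only at hmono
  rw [div_add' _ _ _ hr'.ne', div_add' _ _ _ hr'.ne', div_le_div_iff_of_pos_right hr'] at hmono
  nlinarith

lemma sub_lt_of_deriv_le_neg_mul_rpow_of_one_lt (hc : 0 < c) (hr : 1 < r) (hab : a ≤ b)
    (hpos : ∀ u ∈ Icc a b, 0 < V u) (hdiff : ∀ u ∈ Icc a b, DifferentiableAt ℝ V u)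
    (hV' : ∀ u ∈ Ioo a b, deriv V u ≤ -c * V u ^ r) (hVb : 1 ≤ V b) :
    b - a < 1 / (c * (r - 1)) := by
  have hr' : 0 < r - 1 := sub_pos.2 hr
  have hmono := antitoneOn_rpow_div_add_mul hr.ne' hpos hdiff hV'
    (left_mem_Icc.2 hab) (right_mem_Icc.2 hab) hab
  have hVa : 0 < V a ^ (1 - r) := Real.rpow_pos_of_pos (hpos a (left_mem_Icc.2 hab)) _
  have hVb' : V b ^ (1 - r) ≤ 1 := Real.rpow_le_one_of_one_le_of_nonpos hVb (by linarith)
  rw [lt_div_iff₀ (by positivity)]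
  simp only at hmono
  have hr'' : 1 - r < 0 := by linarith
  rw [div_add' _ _ _ hr''.ne, div_add' _ _ _ hr''.ne, div_le_div_right_of_neg hr''] at hmono
  nlinarith

lemma antitoneOn_of_deriv_le_neg_mul_rpow (hc : 0 ≤ c) (hnn : ∀ u ∈ Icc a b, 0 ≤ V u)
    (hdiff : ∀ u ∈ Icc a b, DifferentiableAt ℝ V u)
    (hV' : ∀ u ∈ Ioo a b, deriv V u ≤ -c * V u ^ r) :
    AntitoneOn V (Icc a b) :=
  antitoneOn_of_deriv_nonpos (convex_Icc a b)
    (fun u hu => (hdiff u hu).continuousAt.continuousWithinAt)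
    (fun u hu => (hdiff u (interior_subset hu)).differentiableWithinAt) fun u hu => by
      rw [interior_Icc] at hu
      have := hnn u (Ioo_subset_Icc_self hu)
      have : 0 ≤ c * V u ^ r := by positivity
      linarith [hV' u hu]

end RpowLyapunov

theorem stmt_2_general (c1 c2 p q : ℝ) (hc1 : 0 < c1) (hc2 : 0 < c2)
    (hp1 : p < 1) (hq : 1 < q)
    (V : ℝ → ℝ)
    (hVnn : ∀ t, 0 ≤ t → 0 ≤ V t)
    (hVdiff : ∀ t, 0 ≤ t → DifferentiableAt ℝ V t)
    (hV' : ∀ t, 0 ≤ t → deriv V t ≤ -c1 * V t ^ p - c2 * V t ^ q) :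
    ∀ t, 1 / (c1 * (1 - p)) + 1 / (c2 * (q - 1)) ≤ t → V t = 0 := by
  intro t ht
  set T2 := 1 / (c2 * (q - 1))
  have hT1 : 0 < 1 / (c1 * (1 - p)) := by have := sub_pos.2 hp1; positivity
  have hT2 : 0 < T2 := by have := sub_pos.2 hq; positivity
  have hdiff : ∀ u ∈ Icc 0 t, DifferentiableAt ℝ V u := fun u hu => hVdiff u hu.1
  have hdecay_p : ∀ u ∈ Ioo 0 t, deriv V u ≤ -c1 * V u ^ p := fun u hu =>
    (hV' u hu.1.le).trans (sub_le_self _ (mul_nonneg hc2.le (Real.rpow_nonneg (hVnn u hu.1.le) q)))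
  have hdecay_q : ∀ u ∈ Ioo 0 t, deriv V u ≤ -c2 * V u ^ q := fun u hu =>
    (hV' u hu.1.le).trans (by linarith [mul_nonneg hc1.le (Real.rpow_nonneg (hVnn u hu.1.le) p)])
  have hanti := antitoneOn_of_deriv_le_neg_mul_rpow hc1.le (fun u hu => hVnn u hu.1) hdiff hdecay_p
  by_contra hVt
  have hpos : ∀ u ∈ Icc 0 t, 0 < V u := fun u hu =>
    ((hVnn t (by linarith)).lt_of_ne' hVt).trans_le (hanti hu (right_mem_Icc.2 (by linarith)) hu.2)
  have hright : Icc T2 t ⊆ Icc 0 t := Icc_subset_Icc_left hT2.le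
  have hleft : Icc 0 T2 ⊆ Icc 0 t := Icc_subset_Icc_right (by linarith)
  rcases le_or_gt (V T2) 1 with hV1 | hV1
  · have := sub_lt_of_deriv_le_neg_mul_rpow_of_lt_one hc1 hp1 (by linarith)
      (fun u hu => hpos u (hright hu)) (fun u hu => hdiff u (hright hu))
      (fun u hu => hdecay_p u (Ioo_subset_Ioo_left hT2.le hu)) hV1
    linarith
  · have := sub_lt_of_deriv_le_neg_mul_rpow_of_one_lt hc2 hq hT2.le
      (fun u hu => hpos u (hleft hu)) (fun u hu => hdiff u (hleft hu))
      (fun u hu => hdecay_q u (Ioo_subset_Ioo_right (by linarith) hu)) hV1.le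
    linarith

theorem stmt_2 (c1 c2 p q : ℝ) (hc1 : 0 < c1) (hc2 : 0 < c2)
    (hp0 : 0 < p) (hp1 : p < 1) (hq : 1 < q)
    (V : ℝ → ℝ)
    (hVnn : ∀ t, 0 ≤ t → 0 ≤ V t)
    (hVdiff : ∀ t, 0 ≤ t → DifferentiableAt ℝ V t)
    (hV' : ∀ t, 0 ≤ t → deriv V t ≤ -c1 * V t ^ p - c2 * V t ^ q) :
    ∀ t, 1 / (c1 * (1 - p)) + 1 / (c2 * (q - 1)) ≤ t → V t = 0 :=
  stmt_2_general c1 c2 p q hc1 hc2 hp1 hq V hVnn hVdiff hV'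
end

section
/- Let N ≥ 1, let G be a simple graph on the vertex set Fin N with real Laplacian matrix L, and let d : Fin N → ℝ with d_i ∈ {0,1} for every vertex i. Set H = diagonal(d) + L. Then: (i) H is positive semidefinite; and (ii) H is positive definite if and only if for every vertex i there exists a vertex j with d_j = 1 that lies in the same connected component of G as i (i.e., every connected component of G contains a pinned vertex). -/
/-!
For `d ≥ 0` both `diagonal d` and `L` are positive semidefinite, hence so is `H`, and `H` is
positive definite iff its kernel is trivial. As `star x ⬝ᵥ H *ᵥ x` is the sum of the two
nonnegative forms, `H *ᵥ x = 0` iff `x` vanishes at pinned vertices and is constant on connected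
components. Such an `x` is zero when every component is pinned; otherwise the indicator of an
unpinned component is a nonzero vector in the kernel.
-/

open Matrix

open scoped ComplexOrder

namespace Matrix.PosSemidef

variable {n 𝕜 : Type*} [Fintype n] [RCLike 𝕜] {A B : Matrix n n 𝕜}

theorem posDef_iff_mulVec_eq_zero [DecidableEq n] (hA : A.PosSemidef) :
    A.PosDef ↔ ∀ x, A *ᵥ x = 0 → x = 0 := by
  rw [hA.posDef_iff_isUnit, ← mulVec_injective_iff_isUnit, ← coe_mulVecLin,
    injective_iff_map_eq_zero]

theorem add_mulVec_eq_zero_iff (hA : A.PosSemidef) (hB : B.PosSemidef) (x : n → 𝕜) :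
    (A + B) *ᵥ x = 0 ↔ A *ᵥ x = 0 ∧ B *ᵥ x = 0 := by
  rw [← (hA.add hB).dotProduct_mulVec_zero_iff, ← hA.dotProduct_mulVec_zero_iff,
    ← hB.dotProduct_mulVec_zero_iff, add_mulVec, dotProduct_add]
  exact add_eq_zero_iff_of_nonneg (hA.dotProduct_mulVec_nonneg x) (hB.dotProduct_mulVec_nonneg x)

end Matrix.PosSemidef

namespace SimpleGraph

variable {V : Type*} [Fintype V] [DecidableEq V] (G : SimpleGraph V) [DecidableRel G.Adj]
  {d : V → ℝ}

theorem posSemidef_diagonal_add_lapMatrix (hd : 0 ≤ d) :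
    (diagonal d + G.lapMatrix ℝ).PosSemidef :=
  (PosSemidef.diagonal hd).add (posSemidef_lapMatrix ℝ G)

theorem diagonal_add_lapMatrix_mulVec_eq_zero_iff (hd : 0 ≤ d) (x : V → ℝ) :
    (diagonal d + G.lapMatrix ℝ) *ᵥ x = 0 ↔
      (∀ i, d i ≠ 0 → x i = 0) ∧ ∀ i j, G.Reachable i j → x i = x j := by
  rw [PosSemidef.add_mulVec_eq_zero_iff (PosSemidef.diagonal hd) (posSemidef_lapMatrix ℝ G),
    lapMatrix_mulVec_eq_zero_iff_forall_reachable]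
  simp only [funext_iff, mulVec_diagonal, Pi.zero_apply, mul_eq_zero, or_iff_not_imp_left]

theorem posDef_diagonal_add_lapMatrix_iff (hd : 0 ≤ d) :
    (diagonal d + G.lapMatrix ℝ).PosDef ↔ ∀ i, ∃ j, d j ≠ 0 ∧ G.Reachable i j := by
  simp only [PosSemidef.posDef_iff_mulVec_eq_zero (G.posSemidef_diagonal_add_lapMatrix hd),
    G.diagonal_add_lapMatrix_mulVec_eq_zero_iff hd]
  refine ⟨fun h i => ?_, fun h x ⟨hpinned, hconst⟩ => funext fun i => ?_⟩
  · by_contra! hunpinned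
    let x : V → ℝ := fun v => if G.Reachable i v then 1 else 0
    have hx_const : ∀ a b, G.Reachable a b → x a = x b := fun a b hab => by
      simp only [x, (⟨(·.trans hab), (·.trans hab.symm)⟩ : G.Reachable i a ↔ G.Reachable i b)]
    have hx : x = 0 := h x ⟨fun j hj => if_neg (hunpinned j hj), hx_const⟩
    simpa [x] using congrFun hx i
  · obtain ⟨j, hj, hij⟩ := h i
    exact (hconst i j hij).trans (hpinned j hj)

end SimpleGraph

theorem stmt_3_general (N : ℕ) (G : SimpleGraph (Fin N)) [DecidableRel G.Adj]
    (d : Fin N → ℝ) (hd : ∀ i, d i = 0 ∨ d i = 1) :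
    (Matrix.diagonal d + G.lapMatrix ℝ).PosSemidef ∧
    ((Matrix.diagonal d + G.lapMatrix ℝ).PosDef ↔
      ∀ i : Fin N, ∃ j : Fin N, d j = 1 ∧ G.Reachable i j) := by
  have hd_nonneg : 0 ≤ d := fun i => by rcases hd i with h | h <;> simp [h]
  have hd_ne_zero : ∀ j, d j ≠ 0 ↔ d j = 1 := fun j => by rcases hd j with h | h <;> simp [h]
  refine ⟨G.posSemidef_diagonal_add_lapMatrix hd_nonneg, ?_⟩
  simp only [G.posDef_diagonal_add_lapMatrix_iff hd_nonneg, hd_ne_zero]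

theorem stmt_3 (N : ℕ) (hN : 1 ≤ N) (G : SimpleGraph (Fin N)) [DecidableRel G.Adj]
    (d : Fin N → ℝ) (hd : ∀ i, d i = 0 ∨ d i = 1) :
    (Matrix.diagonal d + G.lapMatrix ℝ).PosSemidef ∧
    ((Matrix.diagonal d + G.lapMatrix ℝ).PosDef ↔
      ∀ i : Fin N, ∃ j : Fin N, d j = 1 ∧ G.Reachable i j) :=
  stmt_3_general N G d hd
end

section
/- For every real number z, every real χ > 0, and every integer β ≥ 1, one has χ^{3/2 − 2β} · z^{2β} ≥ (z²)^{3/4} − χ^{3/2}. -/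
theorem stmt_4 (z χ : ℝ) (hχ : 0 < χ) (β : ℕ) (hβ : 1 ≤ β) :
    χ ^ ((3 : ℝ) / 2 - 2 * (β : ℝ)) * z ^ (2 * β) ≥
      (z ^ 2) ^ ((3 : ℝ) / 4) - χ ^ ((3 : ℝ) / 2) := by
  have hb : (1:ℝ) ≤ (β:ℝ) := by exact_mod_cast hβ
  have hbpos : (0:ℝ) < (β:ℝ) := by linarith
  have hb0 : (β:ℝ) ≠ 0 := ne_of_gt hbpos
  set w₁ : ℝ := 3 / (4 * (β:ℝ)) with hw₁def
  have hw₁pos : 0 < w₁ := by positivity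
  have hw₁le : w₁ ≤ 1 := by
    rw [hw₁def, div_le_one (by positivity)]
    linarith
  have ht : (0:ℝ) ≤ z ^ 2 := sq_nonneg z
  have hz : z ^ (2 * β) = (z ^ 2) ^ β := by rw [pow_mul]
  have hχe : ∀ e : ℝ, (0:ℝ) ≤ χ ^ e := fun e => Real.rpow_nonneg hχ.le e
  have hp₁ : 0 ≤ χ ^ ((3:ℝ)/2 - 2*(β:ℝ)) * z ^ (2*β) := by
    rw [hz]; exact mul_nonneg (hχe _) (pow_nonneg ht β)
  have key := Real.geom_mean_le_arith_mean2_weighted hw₁pos.le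
    (by linarith : (0:ℝ) ≤ 1 - w₁) hp₁ (hχe ((3:ℝ)/2)) (by ring)
  have heq : (χ ^ ((3:ℝ)/2 - 2*(β:ℝ)) * z ^ (2*β)) ^ w₁ *
      (χ ^ ((3:ℝ)/2)) ^ (1 - w₁) = (z ^ 2) ^ ((3:ℝ)/4) := by
    rw [hz, ← Real.rpow_natCast (z ^ 2) β,
      Real.mul_rpow (hχe _) (Real.rpow_nonneg ht _),
      ← Real.rpow_mul hχ.le, ← Real.rpow_mul ht, ← Real.rpow_mul hχ.le,
      mul_right_comm, ← Real.rpow_add hχ]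
    have e1 : ((3:ℝ)/2 - 2*(β:ℝ)) * w₁ + 3/2 * (1 - w₁) = 0 := by
      rw [hw₁def]; field_simp; ring
    have e2 : (β:ℝ) * w₁ = 3/4 := by rw [hw₁def]; field_simp
    rw [e1, e2, Real.rpow_zero, one_mul]
  rw [heq] at key
  have h1 : w₁ * (χ ^ ((3:ℝ)/2 - 2*(β:ℝ)) * z ^ (2*β)) ≤
      χ ^ ((3:ℝ)/2 - 2*(β:ℝ)) * z ^ (2*β) := by
    nlinarith [hp₁]
  have h2 : (1 - w₁) * χ ^ ((3:ℝ)/2) ≤ χ ^ ((3:ℝ)/2) := by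
    nlinarith [hχe ((3:ℝ)/2)]
  linarith
end

section
/- Let m ≥ 1 be an integer, let Γ be a symmetric positive definite real m×m matrix, and write λmax(Γ⁻¹) for the largest eigenvalue of Γ⁻¹. For any θ, θ̂ ∈ ℝ^m, setting θ̃ = θ − θ̂, one has θ̃ᵀθ̂ ≤ (1/2)·θᵀθ + m/8 − (λmax(Γ⁻¹))^{−3/4} · ((θ̃ᵀ Γ⁻¹ θ̃)/2)^{3/4}. -/
/-!
Writing `θ = θ̃ + θ̂` gives `θ̃ ⬝ θ̂ ≤ (θ ⬝ θ - θ̃ ⬝ θ̃) / 2`, so it suffices to bound the last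
term of the claim by `θ̃ ⬝ θ̃ / 2 + 1 / 8`. The Rayleigh bound `θ̃ᵀ Γ⁻¹ θ̃ ≤ λmax(Γ⁻¹) θ̃ ⬝ θ̃`
turns that term into at most `(θ̃ ⬝ θ̃ / 2) ^ (3/4)`, and `t ^ (3/4) ≤ t + 1/8` for `t ≥ 0`
(Young's inequality with exponents `4/3` and `4`) finishes the proof, as `1/8 ≤ m/8`.
-/

open Matrix

theorem Matrix.IsHermitian.dotProduct_mulVec_le_iSup_eigenvalues_mul {n : Type*} [Fintype n]
    [DecidableEq n] {A : Matrix n n ℝ} (hA : A.IsHermitian) (x : n → ℝ) :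
    x ⬝ᵥ (A *ᵥ x) ≤ (⨆ i, hA.eigenvalues i) * (x ⬝ᵥ x) := by
  open MatrixOrder in
  have hle : A ≤ algebraMap ℝ _ (⨆ i, hA.eigenvalues i) := by
    rw [le_algebraMap_iff_spectrum_le hA.isSelfAdjoint, hA.spectrum_real_eq_range_eigenvalues]
    rintro _ ⟨i, rfl⟩
    exact le_ciSup (Set.finite_range _).bddAbove i
  simpa [sub_mulVec, dotProduct_sub, Algebra.algebraMap_eq_smul_one, smul_mulVec,
    dotProduct_smul] using (Matrix.le_iff.mp hle).dotProduct_mulVec_nonneg x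

theorem Matrix.sub_dotProduct_le {n : Type*} [Fintype n] (x y : n → ℝ) :
    (x - y) ⬝ᵥ y ≤ (x ⬝ᵥ x - (x - y) ⬝ᵥ (x - y)) / 2 := by
  have hy : 0 ≤ y ⬝ᵥ y := by simpa using dotProduct_star_self_nonneg y
  have hx : x ⬝ᵥ x = (x - y) ⬝ᵥ (x - y) + 2 * ((x - y) ⬝ᵥ y) + y ⬝ᵥ y := by
    simp only [sub_dotProduct, dotProduct_sub, dotProduct_comm y x]
    ring
  linarith

theorem Real.rpow_neg_mul_rpow_le_of_le_mul {L a b p : ℝ} (hL : 0 < L) (ha : 0 ≤ a)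
    (hp : 0 ≤ p) (h : a ≤ L * b) : L ^ (-p) * a ^ p ≤ b ^ p := by
  rw [Real.rpow_neg hL.le, inv_mul_eq_div, ← Real.div_rpow ha hL.le]
  exact Real.rpow_le_rpow (div_nonneg ha hL.le) ((div_le_iff₀' hL).mpr h) hp

theorem Real.rpow_three_quarters_le_add {t : ℝ} (ht : 0 ≤ t) :
    t ^ ((3 : ℝ) / 4) ≤ t + 1 / 8 := by
  set u := t ^ ((1 : ℝ) / 4)
  have hu : 0 ≤ u := Real.rpow_nonneg ht _
  have hpow (k : ℕ) : u ^ k = t ^ ((k : ℝ) / 4) := by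
    rw [← Real.rpow_natCast, ← Real.rpow_mul ht]
    ring_nf
  have h3 : t ^ ((3 : ℝ) / 4) = u ^ 3 := by rw [hpow]; norm_num
  have h4 : t = u ^ 4 := by rw [hpow]; norm_num
  rw [h3, h4]
  nlinarith [sq_nonneg (u ^ 2 - u), sq_nonneg (u - 1 / 2), sq_nonneg (u ^ 2 - u - 1 / 4)]

theorem stmt_5 (m : ℕ) (hm : 1 ≤ m) (Γ : Matrix (Fin m) (Fin m) ℝ)
    (hΓ : Γ.PosDef) (hH : (Γ⁻¹).IsHermitian) (θ θhat : Fin m → ℝ) :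
    (θ - θhat) ⬝ᵥ θhat ≤
      (1 / 2) * (θ ⬝ᵥ θ) + (m : ℝ) / 8 -
        (⨆ i, hH.eigenvalues i) ^ (-(3 : ℝ) / 4) *
          (((θ - θhat) ⬝ᵥ (Γ⁻¹ *ᵥ (θ - θhat))) / 2) ^ ((3 : ℝ) / 4) := by
  set x := θ - θhat
  set L := ⨆ i, hH.eigenvalues i
  have hL : 0 < L := (hΓ.inv.eigenvalues_pos ⟨0, hm⟩).trans_le
    (le_ciSup (Set.finite_range _).bddAbove _)
  have hq : 0 ≤ x ⬝ᵥ (Γ⁻¹ *ᵥ x) := by simpa using hΓ.inv.posSemidef.dotProduct_mulVec_nonneg x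
  have hs : 0 ≤ x ⬝ᵥ x := by simpa using dotProduct_star_self_nonneg x
  have hrayleigh : L ^ (-(3 : ℝ) / 4) * (x ⬝ᵥ (Γ⁻¹ *ᵥ x) / 2) ^ ((3 : ℝ) / 4)
      ≤ (x ⬝ᵥ x / 2) ^ ((3 : ℝ) / 4) := by
    rw [neg_div]
    refine Real.rpow_neg_mul_rpow_le_of_le_mul hL (by positivity) (by norm_num) ?_
    linarith [hH.dotProduct_mulVec_le_iSup_eigenvalues_mul x]
  have hyoung := Real.rpow_three_quarters_le_add (by positivity : 0 ≤ x ⬝ᵥ x / 2)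
  have hm' : (1 : ℝ) ≤ m := by exact_mod_cast hm
  linarith [sub_dotProduct_le θ θhat]
end

section
/- For all real numbers θ and θ̂, setting θ̃ = θ − θ̂, and for every real ε with 0 < ε < (2/3)^{3/2}, one has θ̃ · θ̂³ ≤ (1/12 + 3/(4ε⁴)) · θ⁴ − ((4 − 9·ε^{4/3})/4) · θ̃⁴. -/
/-! Writing `t = θ - θhat` and expanding `t (θ - t)³`, the claim splits into
`t θ³ - 3 t² θ² ≤ θ⁴ / 12`, which is `3 θ² (t - θ / 6)² ≥ 0`, and the weighted Young
inequality `3 t³ θ ≤ (9 a / 4) t⁴ + 3 θ⁴ / (4 a³)` with `a = ε^(4/3)`, so that `a³ = ε⁴`. -/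

lemma pow_three_mul_le (x y : ℝ) : x ^ 3 * y ≤ 3 / 4 * x ^ 4 + 1 / 4 * y ^ 4 := by
  -- `3 x⁴ - 4 x³ y + y⁴ = (x - y)² (2 x² + (x + y)²)`
  nlinarith [mul_nonneg (sq_nonneg (x - y)) (add_nonneg (mul_nonneg zero_le_two (sq_nonneg x))
    (sq_nonneg (x + y)))]

lemma pow_three_mul_le_of_pos {a : ℝ} (ha : 0 < a) (x y : ℝ) :
    x ^ 3 * y ≤ 3 / 4 * a * x ^ 4 + y ^ 4 / (4 * a ^ 3) := by
  have h := pow_three_mul_le (a * x) y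
  have ha3 : 0 < a ^ 3 := pow_pos ha 3
  rw [← mul_le_mul_iff_right₀ ha3]
  calc a ^ 3 * (x ^ 3 * y) = (a * x) ^ 3 * y := by ring
    _ ≤ 3 / 4 * (a * x) ^ 4 + 1 / 4 * y ^ 4 := h
    _ = a ^ 3 * (3 / 4 * a * x ^ 4 + y ^ 4 / (4 * a ^ 3)) := by field_simp

lemma mul_pow_three_sub_le (x y : ℝ) : x * y ^ 3 - 3 * x ^ 2 * y ^ 2 ≤ y ^ 4 / 12 := by
  nlinarith [mul_nonneg (sq_nonneg y) (sq_nonneg (x - y / 6))]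

lemma rpow_four_div_three_pow_three {ε : ℝ} (hε : 0 ≤ ε) :
    (ε ^ ((4 : ℝ) / 3)) ^ 3 = ε ^ 4 := by
  rw [← Real.rpow_natCast, ← Real.rpow_mul hε]
  norm_num

theorem stmt_6_general (θ θhat ε : ℝ) (hε : 0 < ε) :
    (θ - θhat) * θhat ^ 3 ≤
      (1 / 12 + 3 / (4 * ε ^ 4)) * θ ^ 4 -
        ((4 - 9 * ε ^ ((4 : ℝ) / 3)) / 4) * (θ - θhat) ^ 4 := by
  have ha : 0 < ε ^ ((4 : ℝ) / 3) := by positivity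
  rw [← rpow_four_div_three_pow_three hε.le]
  have young := pow_three_mul_le_of_pos ha (θ - θhat) θ
  have quadratic := mul_pow_three_sub_le (θ - θhat) θ
  linear_combination 3 * young + quadratic

theorem stmt_6 (θ θhat ε : ℝ) (hε : 0 < ε) (hε' : ε < ((2 : ℝ) / 3) ^ ((3 : ℝ) / 2)) :
    (θ - θhat) * θhat ^ 3 ≤
      (1 / 12 + 3 / (4 * ε ^ 4)) * θ ^ 4 -
        ((4 - 9 * ε ^ ((4 : ℝ) / 3)) / 4) * (θ - θhat) ^ 4 :=
  stmt_6_general θ θhat ε hε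
end

section
/- Let c > 0, p ∈ (0,1), and t0 ≤ t1, and let y : [t0, t1] → ℝ be nonnegative and differentiable with y′(t) ≤ −c · y(t)^p for all t ∈ [t0, t1]. Then y(t1)^{1−p} ≤ max(0, y(t0)^{1−p} − c(1−p)(t1 − t0)). -/
theorem stmt_7 (c p t0 t1 : ℝ) (hc : 0 < c) (hp0 : 0 < p) (hp1 : p < 1) (ht : t0 ≤ t1)
    (y : ℝ → ℝ)
    (hynn : ∀ t ∈ Set.Icc t0 t1, 0 ≤ y t)
    (hdiff : ∀ t ∈ Set.Icc t0 t1, DifferentiableAt ℝ y t)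
    (hy' : ∀ t ∈ Set.Icc t0 t1, deriv y t ≤ -c * y t ^ p) :
    y t1 ^ (1 - p) ≤ max 0 (y t0 ^ (1 - p) - c * (1 - p) * (t1 - t0)) := by
  by_cases hz : ∃ s ∈ Set.Icc t0 t1, y s = 0
  · obtain ⟨s, hs, hys⟩ := hz
    have hcont : ContinuousOn y (Set.Icc t0 t1) := fun t ht' =>
      (hdiff t ht').continuousAt.continuousWithinAt
    have hanti : AntitoneOn y (Set.Icc t0 t1) := by
      apply antitoneOn_of_deriv_nonpos (convex_Icc _ _) hcont
      · intro t ht'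
        exact (hdiff t (interior_subset ht')).differentiableWithinAt
      · intro t ht'
        have ht'' : t ∈ Set.Icc t0 t1 := interior_subset ht'
        have h := hy' t ht''
        have h1 : 0 ≤ y t ^ p := Real.rpow_nonneg (hynn t ht'') p
        nlinarith
    have ht1 : y t1 = 0 :=
      le_antisymm (hys ▸ hanti hs (Set.right_mem_Icc.mpr ht) hs.2)
        (hynn t1 (Set.right_mem_Icc.mpr ht))
    rw [ht1, Real.zero_rpow (by linarith)]
    exact le_max_left _ _
  · push_neg at hz
    have hpos : ∀ t ∈ Set.Icc t0 t1, 0 < y t := fun t ht' =>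
      (hynn t ht').lt_of_ne' (hz t ht')
    set f : ℝ → ℝ := fun t => y t ^ (1 - p) + c * (1 - p) * t with hf
    have hderiv : ∀ t ∈ Set.Icc t0 t1,
        HasDerivAt f ((1 - p) * y t ^ (1 - p - 1) * deriv y t + c * (1 - p)) t := by
      intro t ht'
      have h1 : HasDerivAt y (deriv y t) t := (hdiff t ht').hasDerivAt
      have h2 : HasDerivAt (fun x : ℝ => x ^ (1 - p)) ((1 - p) * y t ^ (1 - p - 1)) (y t) :=
        Real.hasDerivAt_rpow_const (Or.inl (hpos t ht').ne')
      have h3 := h2.comp t h1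
      have h4 : HasDerivAt (fun t => c * (1 - p) * t) (c * (1 - p)) t := by
        simpa using (hasDerivAt_id t).const_mul (c * (1 - p))
      exact h3.add h4
    have hanti : AntitoneOn f (Set.Icc t0 t1) := by
      apply antitoneOn_of_deriv_nonpos (convex_Icc _ _)
      · exact fun t ht' => ((hderiv t ht').differentiableAt).continuousAt.continuousWithinAt
      · exact fun t ht' =>
          ((hderiv t (interior_subset ht')).differentiableAt).differentiableWithinAt
      · intro t ht'
        have ht'' : t ∈ Set.Icc t0 t1 := interior_subset ht'
        rw [(hderiv t ht'').deriv]
        have hy := hy' t ht''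
        have hyt := hpos t ht''
        have hnn : 0 ≤ (1 - p) * y t ^ (1 - p - 1) :=
          mul_nonneg (by linarith) (Real.rpow_nonneg hyt.le _)
        have key : (1 - p) * y t ^ (1 - p - 1) * deriv y t ≤
            (1 - p) * y t ^ (1 - p - 1) * (-c * y t ^ p) :=
          mul_le_mul_of_nonneg_left hy hnn
        have hmul : y t ^ (1 - p - 1) * y t ^ p = 1 := by
          rw [← Real.rpow_add hyt]
          norm_num
        have h5 : (1 - p) * y t ^ (1 - p - 1) * (-c * y t ^ p) = -(c * (1 - p)) := by
          linear_combination (-(c * (1 - p))) * hmul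
        linarith [key, h5]
    have hle := hanti (Set.left_mem_Icc.mpr ht) (Set.right_mem_Icc.mpr ht) ht
    simp only [hf] at hle
    have : y t1 ^ (1 - p) ≤ y t0 ^ (1 - p) - c * (1 - p) * (t1 - t0) := by nlinarith
    exact le_max_of_le_right this
end

section
/- Let c1, c3 > 0, q > 1, and t0 ≤ t1, and let y : [t0, t1] → ℝ be differentiable with y(t) > 0 for all t ∈ [t0, t1] and y′(t) ≤ −c1 · y(t) − c3 · y(t)^q for all t ∈ [t0, t1]. Then y(t1)^{1−q} ≥ (y(t0)^{1−q} + c3/c1) · e^{c1(q−1)(t1 − t0)} − c3/c1. -/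
/-!
The Bernoulli substitution `z = y ^ (1 - q)` turns the inequality into the linear one
`z' ≥ c1 (q - 1) (z + c3 / c1)`; multiplying `z + c3 / c1` by the integrating factor
`exp (-c1 (q - 1) t)` gives a nondecreasing function, whence the exponential lower bound.
-/

open Real Set

theorem mul_exp_le_of_mul_le_deriv {w : ℝ → ℝ} {a t0 t1 : ℝ} (ht : t0 ≤ t1)
    (hw : ∀ t ∈ Icc t0 t1, DifferentiableAt ℝ w t)
    (h : ∀ t ∈ Icc t0 t1, a * w t ≤ deriv w t) :
    w t0 * exp (a * (t1 - t0)) ≤ w t1 := by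
  have hg : ∀ t ∈ Icc t0 t1, HasDerivAt (fun s => w s * exp (-(a * s)))
      ((deriv w t - a * w t) * exp (-(a * t))) t := by
    intro t htm
    have hexp : HasDerivAt (fun s => -(a * s)) (-a) t := by
      simpa using (hasDerivAt_id t).const_mul a |>.fun_neg
    exact ((hw t htm).hasDerivAt.mul hexp.exp).congr_deriv (by ring)
  have hmono : MonotoneOn (fun s => w s * exp (-(a * s))) (Icc t0 t1) := by
    refine monotoneOn_of_deriv_nonneg (convex_Icc t0 t1)
      (fun t htm => (hg t htm).continuousAt.continuousWithinAt) (fun t htm => ?_) (fun t htm => ?_)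
      <;> rw [interior_Icc] at htm
    · exact (hg t (Ioo_subset_Icc_self htm)).differentiableAt.differentiableWithinAt
    · rw [(hg t (Ioo_subset_Icc_self htm)).deriv]
      exact mul_nonneg (sub_nonneg.2 (h t (Ioo_subset_Icc_self htm))) (exp_pos _).le
  have hle : w t0 * exp (-(a * t0)) ≤ w t1 * exp (-(a * t1)) :=
    hmono (left_mem_Icc.2 ht) (right_mem_Icc.2 ht) ht
  calc w t0 * exp (a * (t1 - t0)) = w t0 * exp (-(a * t0)) * exp (a * t1) := by
        rw [mul_assoc, ← exp_add]; congr 2; ring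
    _ ≤ w t1 * exp (-(a * t1)) * exp (a * t1) := by gcongr
    _ = w t1 := by rw [mul_assoc, ← exp_add]; simp

theorem le_deriv_rpow_one_sub {y : ℝ → ℝ} {c1 c3 q t : ℝ} (hq : 1 ≤ q) (hyt : 0 < y t)
    (hdiff : DifferentiableAt ℝ y t) (hy' : deriv y t ≤ -c1 * y t - c3 * y t ^ q) :
    (q - 1) * (c1 * y t ^ (1 - q) + c3) ≤ deriv (fun s => y s ^ (1 - q)) t := by
  rw [(hdiff.hasDerivAt.rpow_const (p := 1 - q) (Or.inl hyt.ne')).deriv]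
  have hpow : y t ^ (1 - q - 1) = y t ^ (-q) := by ring_nf
  have e1 : y t * y t ^ (-q) = y t ^ (1 - q) := by
    rw [sub_eq_add_neg, rpow_add hyt, rpow_one]
  have e2 : y t ^ q * y t ^ (-q) = 1 := by
    rw [← rpow_add hyt]; simp
  calc (q - 1) * (c1 * y t ^ (1 - q) + c3)
      = (-c1 * y t - c3 * y t ^ q) * (1 - q) * y t ^ (-q) := by
        rw [← e1]; linear_combination (1 - q) * c3 * e2
    _ ≤ deriv y t * (1 - q) * y t ^ (1 - q - 1) := by
        rw [hpow]
        exact mul_le_mul_of_nonneg_right (mul_le_mul_of_nonpos_right hy' (by linarith))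
          (rpow_pos_of_pos hyt _).le

theorem stmt_8_general (c1 c3 q t0 t1 : ℝ) (hc1 : 0 < c1) (hq : 1 < q) (ht : t0 ≤ t1)
    (y : ℝ → ℝ)
    (hypos : ∀ t ∈ Set.Icc t0 t1, 0 < y t)
    (hdiff : ∀ t ∈ Set.Icc t0 t1, DifferentiableAt ℝ y t)
    (hy' : ∀ t ∈ Set.Icc t0 t1, deriv y t ≤ -c1 * y t - c3 * y t ^ q) :
    y t1 ^ (1 - q) ≥ (y t0 ^ (1 - q) + c3 / c1) * Real.exp (c1 * (q - 1) * (t1 - t0)) - c3 / c1 := by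
  have hw : ∀ t ∈ Icc t0 t1, DifferentiableAt ℝ (fun s => y s ^ (1 - q) + c3 / c1) t :=
    fun t htm => ((hdiff t htm).rpow_const (Or.inl (hypos t htm).ne')).add_const _
  have hcomp := mul_exp_le_of_mul_le_deriv (a := c1 * (q - 1)) ht hw fun t htm => by
    rw [deriv_add_const]
    convert le_deriv_rpow_one_sub hq.le (hypos t htm) (hdiff t htm) (hy' t htm) using 1
    field_simp
  linarith

theorem stmt_8 (c1 c3 q t0 t1 : ℝ) (hc1 : 0 < c1) (hc3 : 0 < c3) (hq : 1 < q) (ht : t0 ≤ t1)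
    (y : ℝ → ℝ)
    (hypos : ∀ t ∈ Set.Icc t0 t1, 0 < y t)
    (hdiff : ∀ t ∈ Set.Icc t0 t1, DifferentiableAt ℝ y t)
    (hy' : ∀ t ∈ Set.Icc t0 t1, deriv y t ≤ -c1 * y t - c3 * y t ^ q) :
    y t1 ^ (1 - q) ≥ (y t0 ^ (1 - q) + c3 / c1) * Real.exp (c1 * (q - 1) * (t1 - t0)) - c3 / c1 :=
  stmt_8_general c1 c3 q t0 t1 hc1 hq ht y hypos hdiff hy'
end

section
/- Let c1, c3, c4 > 0, q > 1, p_d > 1 and ν_d > 0. Let D ⊆ [0,∞) be a union of countably many pairwise disjoint intervals [t_k^a, t_k) with 0 ≤ t_1^a < t_1 ≤ t_2^a < t_2 ≤ ⋯, and suppose the total length of D ∩ [0, t] is at most t/p_d + ν_d for every t ≥ 0. Let y : [0,∞) → ℝ be continuous with y(t) > 0 for all t, differentiable at every t except possibly at the endpoints t_k^a, t_k, and suppose that at every point of differentiability, y′(t) ≤ −c1·y(t) − c3·y(t)^q if t ∉ D, and y′(t) ≤ c4·y(t) if t ∈ D. Then for all t ≥ 0: y(t)^{1−q} ≥ (c3/c1)·(exp((q−1)·((c1(p_d−1)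 − c4)/p_d)·t − (q−1)(c1 + c4)·ν_d) − 1). In particular, if c1(p_d − 1) − c4 > 0, then y(t) ≤ 1 for all t ≥ t̄, where t̄ is the unique solution of (c3/c1)·(exp((q−1)·((c1(p_d−1) − c4)/p_d)·t̄ − (q−1)(c1 + c4)·ν_d) − 1) = 1. -/
/-!
The Bernoulli substitution `z = y ^ (1 - q)` linearises the differential inequalities:
`z' ≥ (q - 1) (c1 z + c3)` off `D` and `z' ≥ -(q - 1) c4 z` on `D`. Hence `log (z + c3 / c1)`
grows at rate at least `(q - 1) c1` off `D` and at least `-(q - 1) c4` on `D`, so that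
`log (z t + c3 / c1) - (q - 1) c1 t + (q - 1) (c1 + c4) |D ∩ [0, t]|` is nondecreasing, and the
duration bound on `|D ∩ [0, t]|` turns this into the exponential lower bound on `z`.
Since `y` may fail to be differentiable at the interval endpoints, which can accumulate,
monotonicity comes from a mean value argument that tolerates a countable exceptional set.
-/

open MeasureTheory Set Filter Topology

/- If `f b < f a`, each `v ∈ (f b, f a)` is the value of `f` at the last point `c` of `[a, b]`
where `f ≥ v`; the right derivative there cannot be positive, so `c ∈ E` and `E` is uncountable. -/
theorem le_of_hasDerivWithinAt_pos_off_countable {f f' : ℝ → ℝ} {E : Set ℝ} (hE : E.Countable)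
    {a b : ℝ} (hab : a ≤ b) (hf : ContinuousOn f (Icc a b))
    (hf' : ∀ x ∈ Ico a b \ E, HasDerivWithinAt f (f' x) (Ici x) x)
    (hpos : ∀ x ∈ Ico a b \ E, 0 < f' x) : f a ≤ f b := by
  by_contra! hba
  suffices Ioo (f b) (f a) ⊆ f '' E by
    simpa [hba.not_ge] using (hE.image f).mono this
  intro v hv
  set S := Icc a b ∩ f ⁻¹' Ici v
  have hSbdd : BddAbove S := bddAbove_Icc.mono inter_subset_left
  have hcS : sSup S ∈ S :=
    (hf.preimage_isClosed_of_isClosed isClosed_Icc isClosed_Ici).csSup_mem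
      ⟨a, left_mem_Icc.2 hab, hv.2.le⟩ hSbdd
  set c := sSup S
  have hcb : c < b := hcS.1.2.lt_of_ne fun h => by
    have : v ≤ f b := h ▸ hcS.2
    linarith [hv.1]
  have hright : ∀ x ∈ Ioc c b, f x < v := fun x hx => by
    by_contra! h
    exact hx.1.not_ge (le_csSup hSbdd ⟨⟨hcS.1.1.trans hx.1.le, hx.2⟩, h⟩)
  have hfc : f c = v := by
    have hcont : Tendsto f (𝓝[>] c) (𝓝 (f c)) := by
      rw [← nhdsWithin_Ioc_eq_nhdsGT hcb]
      exact (hf c hcS.1).mono fun x hx => ⟨hcS.1.1.trans hx.1.le, hx.2⟩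
    refine le_antisymm (le_of_tendsto hcont ?_) hcS.2
    filter_upwards [Ioc_mem_nhdsGT hcb] with x hx using (hright x hx).le
  refine ⟨c, ?_, hfc⟩
  by_contra hcE
  have hc : c ∈ Ico a b \ E := ⟨⟨hcS.1.1, hcb⟩, hcE⟩
  have hslope : Tendsto (slope f c) (𝓝[>] c) (𝓝 (f' c)) :=
    (hasDerivWithinAt_iff_tendsto_slope' (lt_irrefl c)).1 (hf' c hc).Ioi_of_Ici
  have : f' c ≤ 0 := by
    refine le_of_tendsto hslope ?_
    filter_upwards [Ioc_mem_nhdsGT hcb] with x hx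
    rw [slope_def_field]
    exact div_nonpos_of_nonpos_of_nonneg (by linarith [hright x hx]) (by linarith [hx.1])
  linarith [hpos c hc]

theorem le_of_hasDerivWithinAt_nonneg_off_countable {f f' : ℝ → ℝ} {E : Set ℝ} (hE : E.Countable)
    {a b : ℝ} (hab : a ≤ b) (hf : ContinuousOn f (Icc a b))
    (hf' : ∀ x ∈ Ico a b \ E, HasDerivWithinAt f (f' x) (Ici x) x)
    (hnonneg : ∀ x ∈ Ico a b \ E, 0 ≤ f' x) : f a ≤ f b := by
  have key : ∀ ε > 0, f a ≤ f b + ε * (b - a) := fun ε hε => by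
    have hg : ∀ x ∈ Ico a b \ E,
        HasDerivWithinAt (fun x => f x + ε * (x - a)) (f' x + ε) (Ici x) x := fun x hx =>
      ((hf' x hx).add (((hasDerivWithinAt_id x _).sub_const a).const_mul ε)).congr_deriv (by ring)
    simpa using le_of_hasDerivWithinAt_pos_off_countable hE hab (hf.add (by fun_prop)) hg
      fun x hx => by linarith [hnonneg x hx]
  refine le_of_forall_pos_le_add fun δ hδ => ?_
  have hba : 0 < b - a + 1 := by linarith
  calc f a ≤ f b + δ / (b - a + 1) * (b - a) := key _ (by positivity)
    _ ≤ f b + δ := by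
      gcongr
      rw [div_mul_eq_mul_div, div_le_iff₀ hba]
      nlinarith

noncomputable def occupationTime (D : Set ℝ) (t : ℝ) : ℝ := ∫ s in (0 : ℝ)..t, D.indicator 1 s

theorem intervalIntegrable_indicator_one {D : Set ℝ} (hD : MeasurableSet D) (a b : ℝ) :
    IntervalIntegrable (D.indicator (1 : ℝ → ℝ)) volume a b :=
  ⟨(integrableOn_const measure_Ioc_lt_top.ne).indicator hD,
    (integrableOn_const measure_Ioc_lt_top.ne).indicator hD⟩

theorem occupationTime_eq_measureReal {D : Set ℝ} (hD : MeasurableSet D) {t : ℝ} (ht : 0 ≤ t) :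
    occupationTime D t = volume.real (D ∩ Icc 0 t) := by
  rw [occupationTime, intervalIntegral.integral_of_le ht, Measure.restrict_congr_set Ioc_ae_eq_Icc,
    integral_indicator_one hD, measureReal_restrict_apply hD]

theorem occupationTime_zero (D : Set ℝ) : occupationTime D 0 = 0 :=
  intervalIntegral.integral_same

theorem continuous_occupationTime {D : Set ℝ} (hD : MeasurableSet D) :
    Continuous (occupationTime D) :=
  intervalIntegral.continuous_primitive (intervalIntegrable_indicator_one hD) 0

theorem hasDerivAt_occupationTime {D : Set ℝ} (hD : MeasurableSet D) {x : ℝ} (hx : x ∉ frontier D) :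
    HasDerivAt (occupationTime D) (D.indicator 1 x) x :=
  intervalIntegral.integral_hasDerivAt_right (intervalIntegrable_indicator_one hD 0 x)
    (measurable_const.indicator hD).stronglyMeasurable.stronglyMeasurableAtFilter
    (continuousOn_const.continuousAt_indicator hx)

theorem frontier_iUnion_Ico_subset {a b : ℕ → ℝ} (hab : ∀ k, a k ≤ b k)
    (hba : ∀ k, b k ≤ a (k + 1)) :
    frontier (⋃ k, Ico (a k) (b k)) ⊆ insert (sSup (range a)) (range a ∪ range b) := by
  have ha : Monotone a := monotone_nat_of_le_succ fun k => (hab k).trans (hba k)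
  have hb : Monotone b := monotone_nat_of_le_succ fun k => (hba k).trans (hab (k + 1))
  intro x hx
  by_contra hxE
  simp only [mem_insert_iff, mem_union, mem_range, not_or, not_exists] at hxE
  obtain ⟨hxL, hxa, hxb⟩ := hxE
  by_cases hxD : x ∈ ⋃ k, Ico (a k) (b k)
  · obtain ⟨k, hk⟩ := mem_iUnion.1 hxD
    refine hx.2 (mem_interior_iff_mem_nhds.2 (mem_of_superset ?_ (subset_iUnion _ k)))
    exact mem_of_superset (Ioo_mem_nhds (hk.1.lt_of_ne (hxa k)) hk.2) Ioo_subset_Ico_self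
  suffices ∃ u v, u < x ∧ x < v ∧ ∀ k, b k ≤ u ∨ v ≤ a k by
    obtain ⟨u, v, hu, hv, hgap⟩ := this
    obtain ⟨z, hzI, hzD⟩ := mem_closure_iff_nhds.1 hx.1 _ (Ioo_mem_nhds hu hv)
    obtain ⟨k, hk⟩ := mem_iUnion.1 hzD
    rcases hgap k with h | h
    · linarith [hzI.1, hk.2]
    · linarith [hzI.2, hk.1]
  by_cases hbelow : ∃ k, x < a k
  · classical
    rcases hK : Nat.find hbelow with _ | j
    · refine ⟨x - 1, a 0, by linarith, hK ▸ Nat.find_spec hbelow, fun k => Or.inr (ha k.zero_le)⟩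
    · have haj : a j ≤ x := not_lt.1 (Nat.find_min hbelow (by omega))
      have hbj : b j < x := (not_lt.1 fun h => hxD (mem_iUnion.2 ⟨j, haj, h⟩)).lt_of_ne (hxb j)
      refine ⟨b j, a (j + 1), hbj, hK ▸ Nat.find_spec hbelow, fun k => ?_⟩
      rcases le_or_gt k j with hkj | hkj
      · exact Or.inl (hb hkj)
      · exact Or.inr (ha hkj)
  · push Not at hbelow
    have hbdd : BddAbove (range a) := ⟨x, forall_mem_range.2 hbelow⟩
    have hLx : sSup (range a) < x :=
      (csSup_le (range_nonempty a) (forall_mem_range.2 hbelow)).lt_of_ne (Ne.symm hxL)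
    exact ⟨_, x + 1, hLx, by linarith, fun k =>
      Or.inl ((hba k).trans (le_csSup hbdd (mem_range_self (k + 1))))⟩

/- The right-hand side is the derivative of `log (y ^ (1 - q) + c3 / c1)` when `y' = d`. -/
theorem bernoulli_logDeriv_ge_of_decay {c1 c3 q y d : ℝ} (hc1 : 0 < c1) (hc3 : 0 ≤ c3)
    (hq : 1 ≤ q) (hy : 0 < y) (hd : d ≤ -c1 * y - c3 * y ^ q) :
    (q - 1) * c1 ≤ d * (1 - q) * y ^ (1 - q - 1) / (y ^ (1 - q) + c3 / c1) := by
  have h1 : y * y ^ (1 - q - 1) = y ^ (1 - q) := by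
    rw [Real.rpow_sub_one hy.ne']; field_simp
  have h2 : y ^ q * y ^ (1 - q - 1) = 1 := by
    rw [← Real.rpow_add hy]; norm_num
  have h3 : c1 * (c3 / c1) = c3 := mul_div_cancel₀ c3 hc1.ne'
  have hneg : (1 - q) * y ^ (1 - q - 1) ≤ 0 :=
    mul_nonpos_of_nonpos_of_nonneg (by linarith) (by positivity)
  rw [le_div_iff₀ (by positivity)]
  calc (q - 1) * c1 * (y ^ (1 - q) + c3 / c1)
      = (-c1 * y - c3 * y ^ q) * ((1 - q) * y ^ (1 - q - 1)) := by
        linear_combination (-(q - 1) * c1) * h1 - ((q - 1) * c3) * h2 + (q - 1) * h3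
    _ ≤ d * ((1 - q) * y ^ (1 - q - 1)) := mul_le_mul_of_nonpos_right hd hneg
    _ = d * (1 - q) * y ^ (1 - q - 1) := by ring

theorem bernoulli_logDeriv_ge_of_growth {c1 c3 c4 q y d : ℝ} (hc1 : 0 < c1) (hc3 : 0 ≤ c3)
    (hc4 : 0 ≤ c4) (hq : 1 ≤ q) (hy : 0 < y) (hd : d ≤ c4 * y) :
    -((q - 1) * c4) ≤ d * (1 - q) * y ^ (1 - q - 1) / (y ^ (1 - q) + c3 / c1) := by
  have h1 : y * y ^ (1 - q - 1) = y ^ (1 - q) := by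
    rw [Real.rpow_sub_one hy.ne']; field_simp
  have hneg : (1 - q) * y ^ (1 - q - 1) ≤ 0 :=
    mul_nonpos_of_nonpos_of_nonneg (by linarith) (by positivity)
  have hc : 0 ≤ (q - 1) * c4 * (c3 / c1) := by have := sub_nonneg.2 hq; positivity
  rw [le_div_iff₀ (by positivity)]
  calc -((q - 1) * c4) * (y ^ (1 - q) + c3 / c1)
      ≤ c4 * y * ((1 - q) * y ^ (1 - q - 1)) := by linear_combination ((q - 1) * c4) * h1 + hc
    _ ≤ d * ((1 - q) * y ^ (1 - q - 1)) := mul_le_mul_of_nonpos_right hd hneg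
    _ = d * (1 - q) * y ^ (1 - q - 1) := by ring

theorem mul_exp_le_rpow_one_sub_add_div {c1 c3 c4 q : ℝ} (hc1 : 0 < c1) (hc3 : 0 ≤ c3)
    (hc4 : 0 ≤ c4) (hq : 1 ≤ q) {D E : Set ℝ} (hD : MeasurableSet D) (hDE : frontier D ⊆ E)
    (hE : E.Countable) {y : ℝ → ℝ} (hcont : ContinuousOn y (Ici 0))
    (hypos : ∀ t, 0 ≤ t → 0 < y t) (hdiff : ∀ t, 0 ≤ t → t ∉ E → DifferentiableAt ℝ y t)
    (hoff : ∀ t, 0 ≤ t → DifferentiableAt ℝ y t → t ∉ D → deriv y t ≤ -c1 * y t - c3 * y t ^ q)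
    (hon : ∀ t, 0 ≤ t → DifferentiableAt ℝ y t → t ∈ D → deriv y t ≤ c4 * y t)
    {t : ℝ} (ht : 0 ≤ t) :
    (y 0 ^ (1 - q) + c3 / c1) *
        Real.exp ((q - 1) * c1 * t - (q - 1) * (c1 + c4) * occupationTime D t) ≤
      y t ^ (1 - q) + c3 / c1 := by
  set U : ℝ → ℝ := fun s => y s ^ (1 - q) + c3 / c1
  set X : ℝ → ℝ := fun s => (q - 1) * c1 * s - (q - 1) * (c1 + c4) * occupationTime D s
  have hU : ∀ s, 0 ≤ s → 0 < U s := fun s hs => by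
    have := hypos s hs
    positivity
  have hcontU : ContinuousOn U (Icc 0 t) :=
    ((hcont.mono Icc_subset_Ici_self).rpow_const
      fun s hs => Or.inl (hypos s hs.1).ne').add continuousOn_const
  have hmono : Real.log (U 0) - X 0 ≤ Real.log (U t) - X t := by
    refine le_of_hasDerivWithinAt_nonneg_off_countable hE ht
      ((hcontU.log fun s hs => (hU s hs.1).ne').sub
        ((continuous_const.mul continuous_id).sub
          (continuous_const.mul (continuous_occupationTime hD))).continuousOn)
      (f' := fun s => deriv y s * (1 - q) * y s ^ (1 - q - 1) / U s
        - ((q - 1) * c1 * 1 - (q - 1) * (c1 + c4) * D.indicator 1 s))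
      (fun s hs => ?_) (fun s hs => ?_)
    · have hy := (hdiff s hs.1.1 hs.2).hasDerivAt
      have hUd := (hy.rpow_const (p := 1 - q) (Or.inl (hypos s hs.1.1).ne')).add_const (c3 / c1)
      have hXd := ((hasDerivAt_id s).const_mul ((q - 1) * c1)).sub
        ((hasDerivAt_occupationTime hD fun h => hs.2 (hDE h)).const_mul ((q - 1) * (c1 + c4)))
      exact ((hUd.log (hU s hs.1.1).ne').sub hXd).hasDerivWithinAt
    obtain ⟨⟨hs0, -⟩, hsE⟩ := hs
    have hyd := hdiff s hs0 hsE
    by_cases hsD : s ∈ D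
    · have := bernoulli_logDeriv_ge_of_growth hc1 hc3 hc4 hq (hypos s hs0) (hon s hs0 hyd hsD)
      simp only [hsD, indicator_of_mem, Pi.one_apply]
      linarith
    · have := bernoulli_logDeriv_ge_of_decay hc1 hc3 hq (hypos s hs0) (hoff s hs0 hyd hsD)
      simp only [hsD, not_false_eq_true, indicator_of_notMem]
      linarith
  have hX0 : X 0 = 0 := by simp [X, occupationTime_zero]
  calc U 0 * Real.exp (X t) = Real.exp (Real.log (U 0) + X t) := by
        rw [Real.exp_add, Real.exp_log (hU 0 le_rfl)]
    _ ≤ Real.exp (Real.log (U t)) := Real.exp_le_exp.2 (by linarith)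
    _ = U t := Real.exp_log (hU t ht)

theorem pos_of_mul_exp_sub_one_eq_one {a K C τ : ℝ} (ha : 0 < a) (hK : 0 < K) (hC : 0 ≤ C)
    (h : a * (Real.exp (K * τ - C) - 1) = 1) : 0 < τ := by
  have hexp : 0 < Real.exp (K * τ - C) - 1 := pos_of_mul_pos_right (by rw [h]; exact one_pos) ha.le
  have := Real.one_lt_exp_iff.1 (by linarith)
  exact pos_of_mul_pos_right (by linarith) hK.le

theorem mul_exp_sub_one_le_of_mul_exp_le {c1 c3 c4 q pd νd z₀ z τ t : ℝ} (hc1 : 0 < c1)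
    (hc3 : 0 ≤ c3) (hc4 : 0 ≤ c4) (hq : 1 ≤ q) (hpd : pd ≠ 0) (hz₀ : 0 ≤ z₀)
    (hτ : τ ≤ t / pd + νd)
    (h : (z₀ + c3 / c1) * Real.exp ((q - 1) * c1 * t - (q - 1) * (c1 + c4) * τ) ≤ z + c3 / c1) :
    c3 / c1 * (Real.exp ((q - 1) * ((c1 * (pd - 1) - c4) / pd) * t
      - (q - 1) * (c1 + c4) * νd) - 1) ≤ z := by
  have hexponent : (q - 1) * ((c1 * (pd - 1) - c4) / pd) * t - (q - 1) * (c1 + c4) * νd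
      = (q - 1) * c1 * t - (q - 1) * (c1 + c4) * (t / pd + νd) := by
    field_simp
    ring
  have := sub_nonneg.2 hq
  calc c3 / c1 * (Real.exp ((q - 1) * ((c1 * (pd - 1) - c4) / pd) * t
        - (q - 1) * (c1 + c4) * νd) - 1)
      = c3 / c1 * Real.exp ((q - 1) * c1 * t - (q - 1) * (c1 + c4) * (t / pd + νd)) - c3 / c1 := by
        rw [hexponent]; ring
    _ ≤ (z₀ + c3 / c1) * Real.exp ((q - 1) * c1 * t - (q - 1) * (c1 + c4) * τ) - c3 / c1 := by
        gcongr
        exact le_add_of_nonneg_left hz₀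
    _ ≤ z := by linarith

theorem le_one_of_mul_exp_sub_one_le {q a K C τ t w : ℝ} (hq : 1 < q) (ha : 0 < a)
    (hK : 0 ≤ K) (hτ : a * (Real.exp (K * τ - C) - 1) = 1) (hτt : τ ≤ t)
    (hbound : a * (Real.exp (K * t - C) - 1) ≤ w ^ (1 - q)) : w ≤ 1 := by
  have hge : 1 ≤ w ^ (1 - q) :=
    calc 1 = a * (Real.exp (K * τ - C) - 1) := hτ.symm
      _ ≤ a * (Real.exp (K * t - C) - 1) := by gcongr
      _ ≤ w ^ (1 - q) := hbound
  by_contra! h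
  exact (Real.rpow_lt_one_of_one_lt_of_neg h (by linarith)).not_ge hge

theorem stmt_9_general (c1 c3 c4 q pd νd : ℝ) (hc1 : 0 < c1) (hc3 : 0 < c3) (hc4 : 0 < c4)
    (hq : 1 < q) (hpd : 1 < pd) (hνd : 0 < νd)
    (ta tb : ℕ → ℝ)
    (hord : ∀ k, ta k < tb k) (hord' : ∀ k, tb k ≤ ta (k + 1))
    (D : Set ℝ) (hD : D = ⋃ k, Ico (ta k) (tb k))
    (hdur : ∀ t : ℝ, 0 ≤ t → (volume (D ∩ Icc 0 t)).toReal ≤ t / pd + νd)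
    (y : ℝ → ℝ)
    (hcont : ContinuousOn y (Ici 0))
    (hypos : ∀ t : ℝ, 0 ≤ t → 0 < y t)
    (hdiff : ∀ t : ℝ, 0 ≤ t → (∀ k, t ≠ ta k ∧ t ≠ tb k) → DifferentiableAt ℝ y t)
    (hoff : ∀ t : ℝ, 0 ≤ t → DifferentiableAt ℝ y t → t ∉ D →
      deriv y t ≤ -c1 * y t - c3 * y t ^ q)
    (hon : ∀ t : ℝ, 0 ≤ t → DifferentiableAt ℝ y t → t ∈ D →
      deriv y t ≤ c4 * y t) :
    (∀ t : ℝ, 0 ≤ t →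
      y t ^ (1 - q) ≥
        (c3 / c1) * (Real.exp ((q - 1) * ((c1 * (pd - 1) - c4) / pd) * t
          - (q - 1) * (c1 + c4) * νd) - 1)) ∧
    (0 < c1 * (pd - 1) - c4 →
      ∀ tbar : ℝ,
        (c3 / c1) * (Real.exp ((q - 1) * ((c1 * (pd - 1) - c4) / pd) * tbar
          - (q - 1) * (c1 + c4) * νd) - 1) = 1 →
        ∀ t : ℝ, tbar ≤ t → y t ≤ 1) := by
  have hDmeas : MeasurableSet D := hD ▸ MeasurableSet.iUnion fun k => measurableSet_Ico
  set E := insert (sSup (range ta)) (range ta ∪ range tb)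
  have hDE : frontier D ⊆ E := hD ▸ frontier_iUnion_Ico_subset (fun k => (hord k).le) hord'
  have hE : E.Countable := ((countable_range ta).union (countable_range tb)).insert _
  have hdiffE : ∀ t, 0 ≤ t → t ∉ E → DifferentiableAt ℝ y t := fun t ht htE =>
    hdiff t ht fun k => ⟨fun h => htE (by simp [E, h]), fun h => htE (by simp [E, h])⟩
  set K := (q - 1) * ((c1 * (pd - 1) - c4) / pd)
  set C := (q - 1) * (c1 + c4) * νd
  have hbound : ∀ t, 0 ≤ t → c3 / c1 * (Real.exp (K * t - C) - 1) ≤ y t ^ (1 - q) := fun t ht =>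
    mul_exp_sub_one_le_of_mul_exp_le hc1 hc3.le hc4.le hq.le (by positivity)
      (Real.rpow_nonneg (hypos 0 le_rfl).le _) (occupationTime_eq_measureReal hDmeas ht ▸ hdur t ht)
      (mul_exp_le_rpow_one_sub_add_div hc1 hc3.le hc4.le hq.le hDmeas hDE hE hcont hypos hdiffE
        hoff hon ht)
  refine ⟨hbound, fun hgap tbar htbar t ht => ?_⟩
  have hK : 0 < K := mul_pos (by linarith) (div_pos hgap (by linarith))
  have htbar0 := pos_of_mul_exp_sub_one_eq_one (div_pos hc3 hc1) hK (by positivity) htbar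
  exact le_one_of_mul_exp_sub_one_le hq (div_pos hc3 hc1) hK.le htbar ht
    (hbound t (htbar0.le.trans ht))

theorem stmt_9 (c1 c3 c4 q pd νd : ℝ) (hc1 : 0 < c1) (hc3 : 0 < c3) (hc4 : 0 < c4)
    (hq : 1 < q) (hpd : 1 < pd) (hνd : 0 < νd)
    (ta tb : ℕ → ℝ) (hta0 : 0 ≤ ta 0)
    (hord : ∀ k, ta k < tb k) (hord' : ∀ k, tb k ≤ ta (k + 1))
    (D : Set ℝ) (hD : D = ⋃ k, Ico (ta k) (tb k))
    (hdur : ∀ t : ℝ, 0 ≤ t → (volume (D ∩ Icc 0 t)).toReal ≤ t / pd + νd)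
    (y : ℝ → ℝ)
    (hcont : ContinuousOn y (Ici 0))
    (hypos : ∀ t : ℝ, 0 ≤ t → 0 < y t)
    (hdiff : ∀ t : ℝ, 0 ≤ t → (∀ k, t ≠ ta k ∧ t ≠ tb k) → DifferentiableAt ℝ y t)
    (hoff : ∀ t : ℝ, 0 ≤ t → DifferentiableAt ℝ y t → t ∉ D →
      deriv y t ≤ -c1 * y t - c3 * y t ^ q)
    (hon : ∀ t : ℝ, 0 ≤ t → DifferentiableAt ℝ y t → t ∈ D →
      deriv y t ≤ c4 * y t) :
    (∀ t : ℝ, 0 ≤ t →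
      y t ^ (1 - q) ≥
        (c3 / c1) * (Real.exp ((q - 1) * ((c1 * (pd - 1) - c4) / pd) * t
          - (q - 1) * (c1 + c4) * νd) - 1)) ∧
    (0 < c1 * (pd - 1) - c4 →
      ∀ tbar : ℝ,
        (c3 / c1) * (Real.exp ((q - 1) * ((c1 * (pd - 1) - c4) / pd) * tbar
          - (q - 1) * (c1 + c4) * νd) - 1) = 1 →
        ∀ t : ℝ, tbar ≤ t → y t ≤ 1) :=
  stmt_9_general c1 c3 c4 q pd νd hc1 hc3 hc4 hq hpd hνd ta tb hord hord' D hD hdur y hcont hypos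
    hdiff hoff hon
end

section
/- Let q ≥ 1 and N ≥ 1 be integers, let a < b be positive odd integers, let δ1, δ2, δ3 > 0, and let S be a real q×q matrix such that the largest eigenvalue of the symmetric matrix S + Sᵀ is at most 2δ1. For i = 1, …, N let x_i : [0,∞) → ℝ^q be differentiable functions satisfying x_i′(t) = S·x_i(t) − δ1·x_i(t) − δ2·x_i(t)^{a/b} − δ3·x_i(t)^{(2b−a)/b} for all t ≥ 0, where the signed powers are applied componentwise. Then x_i(t) = 0 for every i and every t ≥ (2b/(b−a)) · (1/δ2 + (Nq)^{(b−a)/(2b)}/δ3). -/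
open Matrix

/-- Signed power: `spow s r = sign s * |s| ^ r`, the real-valued odd-rational power. -/
noncomputable def spow (s r : ℝ) : ℝ := Real.sign s * |s| ^ r

/-- Componentwise signed power of a vector. -/
noncomputable def vspow {q : ℕ} (v : Fin q → ℝ) (r : ℝ) : Fin q → ℝ := fun k => spow (v k) r

/-!
Along each trajectory, `V = x ⬝ᵥ x` satisfies `V' ≤ -c₁ V ^ (1 - e) - c₂ V ^ (1 + e)` with
`e = (b - a) / (2b)`, since `a / b = 1 - 2e` and `(2b - a) / b = 1 + 2e`: the eigenvalue bound on
`S + Sᵀ` absorbs the linear part, subadditivity of `t ↦ t ^ (1 - e)` and the power-mean inequality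
for `t ↦ t ^ (1 + e)` compare the componentwise sums with powers of `V`. Separating variables,
`V ^ (-e)` grows at rate at least `c₂ e`, so `V ≤ 1` by time `1 / (c₂ e)` whatever `V 0` is; after
that `V ^ e` decreases at rate at least `c₁ e` and reaches `0` within another `1 / (c₁ e)`.
-/

open Set

theorem mul_spow_self (y : ℝ) {r : ℝ} (hr : 1 + r ≠ 0) :
    y * spow y r = (y ^ 2) ^ ((1 + r) / 2) := by
  have habs : (y ^ 2) ^ ((1 + r) / 2) = |y| ^ (1 + r) := by
    rw [← sq_abs, ← Real.rpow_natCast, ← Real.rpow_mul (abs_nonneg y)]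
    norm_num [mul_div_cancel₀]
  rw [habs]
  rcases lt_trichotomy y 0 with hy | rfl | hy
  · rw [spow, Real.sign_of_neg hy, abs_of_neg hy, Real.rpow_add (neg_pos.mpr hy), Real.rpow_one]
    ring
  · simp [spow, Real.zero_rpow hr]
  · rw [spow, Real.sign_of_pos hy, abs_of_pos hy, Real.rpow_add hy, Real.rpow_one, one_mul]

theorem dotProduct_vspow_self {q : ℕ} (v : Fin q → ℝ) {r : ℝ} (hr : 1 + r ≠ 0) :
    v ⬝ᵥ vspow v r = ∑ k, (v k ^ 2) ^ ((1 + r) / 2) :=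
  Finset.sum_congr rfl fun k _ => mul_spow_self (v k) hr

theorem Real.rpow_sum_le_sum_rpow {ι : Type*} (s : Finset ι) {f : ι → ℝ} (hf : ∀ i ∈ s, 0 ≤ f i)
    {p : ℝ} (hp₀ : 0 < p) (hp₁ : p ≤ 1) : (∑ i ∈ s, f i) ^ p ≤ ∑ i ∈ s, f i ^ p :=
  Finset.le_sum_of_subadditive_on_pred (· ^ p) (0 ≤ ·) (Real.zero_rpow hp₀.ne').le
    (fun _ _ hx hy => Real.rpow_add_le_add_rpow hx hy hp₀.le hp₁) (fun _ _ => add_nonneg) f hf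

theorem Real.rpow_sum_div_card_rpow_le_sum_rpow {ι : Type*} (s : Finset ι) {f : ι → ℝ}
    (hf : ∀ i ∈ s, 0 ≤ f i) {p : ℝ} (hp : 1 ≤ p) :
    (∑ i ∈ s, f i) ^ p / (s.card : ℝ) ^ (p - 1) ≤ ∑ i ∈ s, f i ^ p := by
  rcases (Real.rpow_nonneg (Nat.cast_nonneg s.card) (p - 1)).eq_or_lt with h | h
  · rw [← h, div_zero]
    exact Finset.sum_nonneg fun i hi => Real.rpow_nonneg (hf i hi) p
  · rw [div_le_iff₀' h]
    exact Real.rpow_sum_le_const_mul_sum_rpow_of_nonneg s hp hf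

open scoped MatrixOrder in
theorem Matrix.IsHermitian.dotProduct_mulVec_le {n : Type*} [Fintype n] [DecidableEq n]
    {M : Matrix n n ℝ} (hM : M.IsHermitian) {c : ℝ} (hc : ∀ i, hM.eigenvalues i ≤ c)
    (v : n → ℝ) : v ⬝ᵥ M *ᵥ v ≤ c * (v ⬝ᵥ v) := by
  have hle : M ≤ algebraMap ℝ (Matrix n n ℝ) c :=
    le_algebraMap_of_spectrum_le (fun x hx => by
      obtain ⟨i, rfl⟩ := hM.spectrum_real_eq_range_eigenvalues ▸ hx
      exact hc i) hM.isSelfAdjoint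
  have := (le_iff.mp hle).dotProduct_mulVec_nonneg v
  simp only [sub_mulVec, Algebra.algebraMap_eq_smul_one, smul_mulVec, one_mulVec, dotProduct_sub,
    dotProduct_smul, star_trivial, smul_eq_mul] at this
  linarith

theorem dotProduct_mulVec_le_of_eigenvalues_add_transpose_le {n : Type*} [Fintype n]
    [DecidableEq n] {S : Matrix n n ℝ} (hS : (S + Sᵀ).IsHermitian) {c : ℝ}
    (hc : ∀ i, hS.eigenvalues i ≤ 2 * c) (v : n → ℝ) : v ⬝ᵥ S *ᵥ v ≤ c * (v ⬝ᵥ v) := by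
  have hsymm : v ⬝ᵥ (S + Sᵀ) *ᵥ v = 2 * (v ⬝ᵥ S *ᵥ v) := by
    rw [add_mulVec, dotProduct_add, dotProduct_mulVec v Sᵀ, vecMul_transpose, dotProduct_comm]
    ring
  linarith [hS.dotProduct_mulVec_le hc v]

theorem HasDerivAt.dotProduct_self {n : Type*} [Fintype n] {x : ℝ → n → ℝ} {x' : n → ℝ} {t : ℝ}
    (hx : HasDerivAt x x' t) : HasDerivAt (fun s => x s ⬝ᵥ x s) (2 * (x t ⬝ᵥ x')) t := by
  have := HasDerivAt.fun_sum (u := Finset.univ) fun k _ =>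
    (hasDerivAt_pi.mp hx k).fun_mul (hasDerivAt_pi.mp hx k)
  refine this.congr_deriv ?_
  simp only [_root_.dotProduct, Finset.mul_sum]
  exact Finset.sum_congr rfl fun k _ => by ring

theorem rpow_div_add_mul_sub_le_of_deriv_le {V V' : ℝ → ℝ} {c r t₀ t₁ : ℝ} (hr : r ≠ 0)
    (ht : t₀ ≤ t₁) (hV : ∀ s ∈ Icc t₀ t₁, HasDerivAt V (V' s) s)
    (hpos : ∀ s ∈ Icc t₀ t₁, 0 < V s) (hV' : ∀ s ∈ Icc t₀ t₁, V' s ≤ -c * V s ^ (1 - r)) :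
    V t₁ ^ r / r + c * (t₁ - t₀) ≤ V t₀ ^ r / r := by
  have hderiv : ∀ s ∈ Icc t₀ t₁, HasDerivAt (fun u => V u ^ r / r + c * u)
      (V s ^ (r - 1) * V' s + c) s := fun s hs => by
    refine ((((hV s hs).rpow_const (p := r) (Or.inl (hpos s hs).ne')).div_const r).fun_add
      ((hasDerivAt_id' s).const_mul c)).congr_deriv ?_
    field_simp
  have hanti : AntitoneOn (fun u => V u ^ r / r + c * u) (Icc t₀ t₁) := by
    refine antitoneOn_of_hasDerivWithinAt_nonpos (convex_Icc t₀ t₁)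
      (fun s hs => (hderiv s hs).continuousAt.continuousWithinAt)
      (fun s hs => (hderiv s (interior_subset hs)).hasDerivWithinAt) fun s hs => ?_
    have hs := interior_subset hs
    have hcancel : V s ^ (r - 1) * V s ^ (1 - r) = 1 := by
      rw [← Real.rpow_add (hpos s hs), sub_add_sub_cancel', sub_self, Real.rpow_zero]
    calc V s ^ (r - 1) * V' s + c ≤ V s ^ (r - 1) * (-c * V s ^ (1 - r)) + c := by
          gcongr
          exacts [(Real.rpow_pos_of_pos (hpos s hs) _).le, hV' s hs]
      _ = 0 := by linear_combination (-c) * hcancel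
  have := hanti (left_mem_Icc.mpr ht) (right_mem_Icc.mpr ht) ht
  simp only at this
  linarith

theorem eq_zero_of_deriv_le_neg_rpow_sub_rpow {V V' : ℝ → ℝ} {c₁ c₂ e : ℝ} (hc₁ : 0 < c₁)
    (hc₂ : 0 < c₂) (he : 0 < e) (hV₀ : ∀ t, 0 ≤ t → 0 ≤ V t)
    (hV : ∀ t, 0 ≤ t → HasDerivAt V (V' t) t)
    (hV' : ∀ t, 0 ≤ t → V' t ≤ -c₁ * V t ^ (1 - e) - c₂ * V t ^ (1 + e))
    {t : ℝ} (ht : (1 / c₁ + 1 / c₂) / e ≤ t) : V t = 0 := by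
  have hanti : AntitoneOn V (Ici 0) :=
    antitoneOn_of_hasDerivWithinAt_nonpos (convex_Ici 0)
      (fun s hs => (hV s hs).continuousAt.continuousWithinAt)
      (fun s hs => (hV s (interior_subset hs)).hasDerivWithinAt)
      fun s hs => by
        have hs := interior_subset (s := Ici (0 : ℝ)) hs
        nlinarith [hV' s hs, Real.rpow_nonneg (hV₀ s hs) (1 - e),
          Real.rpow_nonneg (hV₀ s hs) (1 + e)]
  set T₁ := 1 / (c₂ * e)
  set T := T₁ + 1 / (c₁ * e)
  have hT₁ : 0 ≤ T₁ := by positivity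
  have hT₁T : T₁ ≤ T := le_add_of_nonneg_right (by positivity)
  have hTt : T ≤ t := by
    convert ht using 1
    simp only [T, T₁]
    field_simp
    ring
  suffices hVT : V T = 0 from
    le_antisymm (hVT ▸ hanti (hT₁.trans hT₁T) (hT₁.trans (hT₁T.trans hTt)) hTt)
      (hV₀ t (hT₁.trans (hT₁T.trans hTt)))
  by_contra hne
  have hpos : ∀ s ∈ Icc 0 T, 0 < V s := fun s hs =>
    (lt_of_le_of_ne (hV₀ T (hT₁.trans hT₁T)) (Ne.symm hne)).trans_le
      (hanti hs.1 (hT₁.trans hT₁T : (0 : ℝ) ≤ T) hs.2)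
  have phase₁ := rpow_div_add_mul_sub_le_of_deriv_le (c := c₂) (neg_ne_zero.mpr he.ne') hT₁
    (fun s hs => hV s hs.1) (fun s hs => hpos s ⟨hs.1, hs.2.trans hT₁T⟩) fun s hs => by
      rw [sub_neg_eq_add]
      nlinarith [hV' s hs.1, Real.rpow_nonneg (hV₀ s hs.1) (1 - e)]
  have phase₂ := rpow_div_add_mul_sub_le_of_deriv_le (c := c₁) he.ne' hT₁T
    (fun s hs => hV s (hT₁.trans hs.1)) (fun s hs => hpos s ⟨hT₁.trans hs.1, hs.2⟩) fun s hs => by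
      nlinarith [hV' s (hT₁.trans hs.1), Real.rpow_nonneg (hV₀ s (hT₁.trans hs.1)) (1 + e)]
  have hT₁e : c₂ * (T₁ - 0) = 1 / e := by
    simp only [T₁, sub_zero]
    field_simp
  have hTe : c₁ * (T - T₁) = 1 / e := by
    simp only [T, add_sub_cancel_left]
    field_simp
  have hneg : 1 < V T₁ ^ (-e) := by
    have h0 : 0 < V 0 ^ (-e) / e :=
      div_pos (Real.rpow_pos_of_pos (hpos 0 ⟨le_rfl, hT₁.trans hT₁T⟩) _) he
    rw [hT₁e, div_neg, div_neg] at phase₁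
    exact (div_lt_div_iff_of_pos_right he).mp (by linarith)
  have hdec : V T ^ e + 1 ≤ V T₁ ^ e := by
    rw [hTe, ← add_div] at phase₂
    exact (div_le_div_iff_of_pos_right he).mp phase₂
  rw [Real.rpow_neg (hV₀ T₁ hT₁), one_lt_inv₀ (Real.rpow_pos_of_pos (hpos T₁ ⟨hT₁, hT₁T⟩) e)]
    at hneg
  linarith [Real.rpow_nonneg (hV₀ T (hT₁.trans hT₁T)) e]

theorem dotProduct_filterDynamics_le {q : ℕ} {S : Matrix (Fin q) (Fin q) ℝ}
    (hS : (S + Sᵀ).IsHermitian) {δ₁ δ₂ δ₃ e : ℝ} (hS₁ : ∀ i, hS.eigenvalues i ≤ 2 * δ₁)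
    (hδ₂ : 0 ≤ δ₂) (hδ₃ : 0 ≤ δ₃) (he₀ : 0 ≤ e) (he₁ : e < 1) (v : Fin q → ℝ) :
    v ⬝ᵥ (S *ᵥ v - δ₁ • v - δ₂ • vspow v (1 - 2 * e) - δ₃ • vspow v (1 + 2 * e)) ≤
      -δ₂ * (v ⬝ᵥ v) ^ (1 - e) - δ₃ / (q : ℝ) ^ e * (v ⬝ᵥ v) ^ (1 + e) := by
  have hvv : v ⬝ᵥ v = ∑ k, v k ^ 2 := by simp only [dotProduct, sq]
  have hsq : ∀ k ∈ Finset.univ, 0 ≤ v k ^ 2 := fun k _ => sq_nonneg (v k)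
  have hsub : v ⬝ᵥ vspow v (1 - 2 * e) = ∑ k, (v k ^ 2) ^ (1 - e) := by
    rw [dotProduct_vspow_self v (by linarith)]
    ring_nf
  have hsup : v ⬝ᵥ vspow v (1 + 2 * e) = ∑ k, (v k ^ 2) ^ (1 + e) := by
    rw [dotProduct_vspow_self v (by linarith)]
    ring_nf
  have hlow : (v ⬝ᵥ v) ^ (1 - e) ≤ ∑ k, (v k ^ 2) ^ (1 - e) :=
    hvv ▸ Real.rpow_sum_le_sum_rpow Finset.univ hsq (by linarith) (by linarith)
  have hhigh : (v ⬝ᵥ v) ^ (1 + e) / (q : ℝ) ^ e ≤ ∑ k, (v k ^ 2) ^ (1 + e) := by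
    have := Real.rpow_sum_div_card_rpow_le_sum_rpow Finset.univ hsq (p := 1 + e) (by linarith)
    rwa [Finset.card_univ, Fintype.card_fin, add_sub_cancel_left, ← hvv] at this
  have hquad := dotProduct_mulVec_le_of_eigenvalues_add_transpose_le hS hS₁ v
  simp only [dotProduct_sub, dotProduct_smul, smul_eq_mul, hsub, hsup]
  have := mul_le_mul_of_nonneg_left hlow hδ₂
  have := mul_le_mul_of_nonneg_left hhigh hδ₃
  rw [div_mul_eq_mul_div, mul_div_assoc]
  linarith

theorem stmt_11_general (q N a b : ℕ) (hq : 1 ≤ q) (hN : 1 ≤ N)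
    (hab : a < b)
    (δ1 δ2 δ3 : ℝ) (hδ2 : 0 < δ2) (hδ3 : 0 < δ3)
    (S : Matrix (Fin q) (Fin q) ℝ) (hSH : (S + Sᵀ).IsHermitian)
    (hSbound : (⨆ i, hSH.eigenvalues i) ≤ 2 * δ1)
    (x : Fin N → ℝ → Fin q → ℝ)
    (hdyn : ∀ i, ∀ t : ℝ, 0 ≤ t → HasDerivAt (x i)
      (S *ᵥ x i t - δ1 • x i t - δ2 • vspow (x i t) ((a : ℝ) / b)
        - δ3 • vspow (x i t) ((2 * (b : ℝ) - a) / b)) t) :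
    ∀ i, ∀ t : ℝ,
      (2 * (b : ℝ) / ((b : ℝ) - a)) *
          (1 / δ2 + ((N : ℝ) * q) ^ (((b : ℝ) - a) / (2 * b)) / δ3) ≤ t →
      x i t = 0 := by
  intro i t ht
  have hab' : (a : ℝ) < b := by exact_mod_cast hab
  have hb : (0 : ℝ) < b := (Nat.cast_nonneg a).trans_lt hab'
  have hq' : (0 : ℝ) < q := by exact_mod_cast hq
  set e := ((b : ℝ) - a) / (2 * b) with he
  have he₀ : 0 < e := div_pos (by linarith) (by positivity)
  have he₁ : e < 1 :=
    (div_lt_one (by positivity)).mpr (by linarith [(Nat.cast_nonneg a : (0 : ℝ) ≤ a)])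
  have hr₁ : (a : ℝ) / b = 1 - 2 * e := by rw [he]; field_simp; ring
  have hr₂ : (2 * (b : ℝ) - a) / b = 1 + 2 * e := by rw [he]; field_simp; ring
  simp only [hr₁, hr₂] at hdyn
  have hS₁ : ∀ j, hSH.eigenvalues j ≤ 2 * δ1 := fun j =>
    (le_ciSup (Set.finite_range _).bddAbove j).trans hSbound
  have hTime : (1 / (2 * δ2) + 1 / (2 * δ3 / (q : ℝ) ^ e)) / e ≤ t := by
    refine le_trans ?_ ht
    rw [div_eq_mul_one_div _ e, mul_comm, he, one_div_div, one_div_div]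
    gcongr ?_ * (1 / ?_ + ?_ / ?_)
    · linarith
    · exact Real.rpow_le_rpow hq'.le (le_mul_of_one_le_left hq'.le (by exact_mod_cast hN)) he₀.le
    · linarith
  refine dotProduct_self_eq_zero.mp (eq_zero_of_deriv_le_neg_rpow_sub_rpow
    (V := fun u => x i u ⬝ᵥ x i u) (c₁ := 2 * δ2) (c₂ := 2 * δ3 / (q : ℝ) ^ e)
    (by positivity) (by positivity) he₀ (fun s _ => dotProduct_self_star_nonneg (x i s))
    (fun s hs => (hdyn i s hs).dotProduct_self)
    (fun s _ => ?_) hTime)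
  have := dotProduct_filterDynamics_le hSH hS₁ hδ2.le hδ3.le he₀.le he₁ (x i s)
  rw [mul_div_assoc]
  linarith

theorem stmt_11 (q N a b : ℕ) (hq : 1 ≤ q) (hN : 1 ≤ N)
    (ha : Odd a) (hb : Odd b) (ha0 : 0 < a) (hab : a < b)
    (δ1 δ2 δ3 : ℝ) (hδ1 : 0 < δ1) (hδ2 : 0 < δ2) (hδ3 : 0 < δ3)
    (S : Matrix (Fin q) (Fin q) ℝ) (hSH : (S + Sᵀ).IsHermitian)
    (hSbound : (⨆ i, hSH.eigenvalues i) ≤ 2 * δ1)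
    (x : Fin N → ℝ → Fin q → ℝ)
    (hdyn : ∀ i, ∀ t : ℝ, 0 ≤ t → HasDerivAt (x i)
      (S *ᵥ x i t - δ1 • x i t - δ2 • vspow (x i t) ((a : ℝ) / b)
        - δ3 • vspow (x i t) ((2 * (b : ℝ) - a) / b)) t) :
    ∀ i, ∀ t : ℝ,
      (2 * (b : ℝ) / ((b : ℝ) - a)) *
          (1 / δ2 + ((N : ℝ) * q) ^ (((b : ℝ) - a) / (2 * b)) / δ3) ≤ t →
      x i t = 0 :=
  stmt_11_general q N a b hq hN hab δ1 δ2 δ3 hδ2 hδ3 S hSH hSbound x hdyn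
end

section
/- Let N, q ≥ 1 be integers, let a < b be positive odd integers, let a_{ij} ≥ 0 (1 ≤ i, j ≤ N) be symmetric weights (a_{ij} = a_{ji}), let d_i ≥ 0 (1 ≤ i ≤ N), and let x_1, …, x_N ∈ ℝ^q. Define ã_{ij} = a_{ij}^{2b/(3b−a)}, d̃_i = d_i^{2b/(3b−a)}, and Q̃(x) = (1/2)·∑_{i,j=1}^N ã_{ij}·‖x_i − x_j‖² + ∑_{i=1}^N d̃_i·‖x_i‖². Then ∑_{i=1}^N ⟨x_i, ∑_{j=1}^N a_{ij}·(x_i − x_j)^{(2b−a)/b} + d_i·x_i^{(2b−a)/b}⟩ ≥ (1/2)·(q(N+1)²)^{(a−b)/(2b)}·(2·Q̃(x))^{(3b−a)/(2b)}. -/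
open Finset

/-!
Pairing the double sum with its transpose (`A` is symmetric, the signed power odd) turns the left
side into `(1/2) ∑ A i j |x i k - x j k| ^ (2r) + ∑ d i |x i k| ^ (2r)` with `r = (3b - a)/(2b)`.
Since `ã = A ^ (1/r)`, these are the `r`-th powers of the terms `ã i j (x i k - x j k) ^ 2` and
`d̃ i (x i k) ^ 2` of `2 Q̃`, pinning terms counted twice. The power-mean inequality
`(∑ u) ^ r ≤ n ^ (r - 1) ∑ u ^ r` over these `n ≤ q (N + 1) ^ 2` terms gives the claim.
-/

lemma spow_odd (r : ℝ) : Function.Odd (spow · r) := fun s => by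
  simp [spow, Real.sign_neg]

lemma mul_spow_self_s13 (s : ℝ) {p : ℝ} (hp : p + 1 ≠ 0) : s * spow s p = |s| ^ (p + 1) := by
  rcases lt_trichotomy s 0 with hs | rfl | hs
  · rw [spow, Real.sign_of_neg hs, Real.rpow_add_one (abs_pos.2 hs.ne).ne', abs_of_neg hs]
    ring
  · simp [spow, Real.zero_rpow hp]
  · rw [spow, Real.sign_of_pos hs, Real.rpow_add_one (abs_pos.2 hs.ne').ne', abs_of_pos hs]
    ring

section Laplacian

variable {ι κ : Type*}

/-- The `Bool` factor lists each pinning term `c i * x i k ^ 2` twice, so that these terms add up to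
twice the pinned quadratic form. -/
def pinnedTerms (W : ι → ι → ℝ) (c : ι → ℝ) (x : ι → κ → ℝ) :
    (ι × ι × κ) ⊕ (Bool × ι × κ) → ℝ :=
  Sum.elim (fun m => W m.1 m.2.1 * (x m.1 m.2.2 - x m.2.1 m.2.2) ^ 2)
    (fun m => c m.2.1 * x m.2.1 m.2.2 ^ 2)

lemma pinnedTerms_nonneg {W : ι → ι → ℝ} (hW : ∀ i j, 0 ≤ W i j) {c : ι → ℝ}
    (hc : ∀ i, 0 ≤ c i) (x : ι → κ → ℝ) (m : (ι × ι × κ) ⊕ (Bool × ι × κ)) :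
    0 ≤ pinnedTerms W c x m := by
  rcases m with ⟨i, j, k⟩ | ⟨_, i, k⟩
  · exact mul_nonneg (hW i j) (sq_nonneg _)
  · exact mul_nonneg (hc i) (sq_nonneg _)

variable [Fintype ι] [Fintype κ]

lemma sum_sum_mul_odd_sub_eq_half {A : ι → ι → ℝ} (hA : ∀ i j, A i j = A j i)
    {φ : ℝ → ℝ} (hφ : Function.Odd φ) (y : ι → ℝ) :
    ∑ i, ∑ j, A i j * (y i * φ (y i - y j)) =
      (1 / 2) * ∑ i, ∑ j, A i j * ((y i - y j) * φ (y i - y j)) := by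
  have hswap : ∑ i, ∑ j, A i j * (y i * φ (y i - y j)) =
      -∑ i, ∑ j, A i j * (y j * φ (y i - y j)) := by
    rw [Finset.sum_comm, ← Finset.sum_neg_distrib]
    refine Finset.sum_congr rfl fun i _ => ?_
    rw [← Finset.sum_neg_distrib]
    refine Finset.sum_congr rfl fun j _ => ?_
    rw [hA, ← neg_sub, hφ]
    ring
  have hsplit : ∑ i, ∑ j, A i j * ((y i - y j) * φ (y i - y j)) =
      ∑ i, ∑ j, A i j * (y i * φ (y i - y j)) - ∑ i, ∑ j, A i j * (y j * φ (y i - y j)) := by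
    simp only [← Finset.sum_sub_distrib, sub_mul, mul_sub]
  linarith

lemma sum_mul_laplacian_add_pinning {A : ι → ι → ℝ} (hA : ∀ i j, A i j = A j i)
    {φ : ℝ → ℝ} (hφ : Function.Odd φ) (d : ι → ℝ) (x : ι → κ → ℝ) :
    ∑ i, ∑ k, x i k * ((∑ j, A i j * φ (x i k - x j k)) + d i * φ (x i k)) =
      (1 / 2) * ∑ i, ∑ j, ∑ k, A i j * ((x i k - x j k) * φ (x i k - x j k)) +
        ∑ i, ∑ k, d i * (x i k * φ (x i k)) := by
  have hcoupling : ∑ i, ∑ k, x i k * ∑ j, A i j * φ (x i k - x j k) =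
      (1 / 2) * ∑ i, ∑ j, ∑ k, A i j * ((x i k - x j k) * φ (x i k - x j k)) :=
    calc _ = ∑ k, ∑ i, ∑ j, A i j * (x i k * φ (x i k - x j k)) := by
          simp only [Finset.mul_sum, mul_left_comm (x _ _)]
          exact Finset.sum_comm
      _ = ∑ k, (1 / 2) * ∑ i, ∑ j, A i j * ((x i k - x j k) * φ (x i k - x j k)) :=
          Finset.sum_congr rfl fun k _ => sum_sum_mul_odd_sub_eq_half hA hφ (x · k)
      _ = _ := by
          rw [← Finset.mul_sum, Finset.sum_comm]
          exact congrArg _ (Finset.sum_congr rfl fun i _ => Finset.sum_comm)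
  simp only [mul_add, Finset.sum_add_distrib, hcoupling, mul_left_comm (x _ _)]

lemma sum_pinnedTerms (W : ι → ι → ℝ) (c : ι → ℝ) (x : ι → κ → ℝ) :
    ∑ m, pinnedTerms W c x m =
      ∑ i, ∑ j, W i j * ∑ k, (x i k - x j k) ^ 2 + 2 * ∑ i, c i * ∑ k, x i k ^ 2 := by
  rw [two_mul]
  simp only [pinnedTerms, Fintype.sum_sum_type, Sum.elim_inl, Sum.elim_inr,
    Fintype.sum_prod_type, Fintype.sum_bool, Finset.mul_sum]

lemma mul_sq_rpow {w : ℝ} (hw : 0 ≤ w) (s r : ℝ) : (w * s ^ 2) ^ r = w ^ r * |s| ^ (2 * r) := by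
  rw [Real.mul_rpow hw (sq_nonneg s), ← sq_abs, ← Real.rpow_natCast, ← Real.rpow_mul (abs_nonneg s)]
  norm_num

lemma sum_pinnedTerms_rpow {W : ι → ι → ℝ} (hW : ∀ i j, 0 ≤ W i j) {c : ι → ℝ}
    (hc : ∀ i, 0 ≤ c i) (x : ι → κ → ℝ) (r : ℝ) :
    ∑ m, pinnedTerms W c x m ^ r =
      ∑ i, ∑ j, ∑ k, W i j ^ r * |x i k - x j k| ^ (2 * r) +
        2 * ∑ i, ∑ k, c i ^ r * |x i k| ^ (2 * r) := by
  simp only [pinnedTerms, Fintype.sum_sum_type, Sum.elim_inl, Sum.elim_inr,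
    Fintype.sum_prod_type, Fintype.sum_bool, mul_sq_rpow (hW _ _), mul_sq_rpow (hc _)]
  ring

lemma card_pinnedTerms_le :
    (Fintype.card ((ι × ι × κ) ⊕ (Bool × ι × κ)) : ℝ) ≤
      Fintype.card κ * (Fintype.card ι + 1) ^ 2 := by
  simp only [Fintype.card_sum, Fintype.card_prod, Fintype.card_bool]
  push_cast
  nlinarith [sq_nonneg (Fintype.card ι : ℝ), Nat.cast_nonneg (α := ℝ) (Fintype.card κ)]

end Laplacian

lemma rpow_mul_rpow_sum_le_sum_rpow {α : Type*} {s : Finset α} {f : α → ℝ}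
    (hf : ∀ i ∈ s, 0 ≤ f i) {r M : ℝ} (hr : 1 ≤ r) (hsM : (#s : ℝ) ≤ M) (hM : 0 < M) :
    M ^ (1 - r) * (∑ i ∈ s, f i) ^ r ≤ ∑ i ∈ s, f i ^ r := by
  calc M ^ (1 - r) * (∑ i ∈ s, f i) ^ r
      ≤ M ^ (1 - r) * (M ^ (r - 1) * ∑ i ∈ s, f i ^ r) := by
        gcongr
        refine (Real.rpow_sum_le_const_mul_sum_rpow_of_nonneg s hr hf).trans ?_
        gcongr
        exact Finset.sum_nonneg fun i hi => Real.rpow_nonneg (hf i hi) r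
    _ = ∑ i ∈ s, f i ^ r := by
        rw [← mul_assoc, ← Real.rpow_add hM]
        simp

theorem stmt_13_general (N q a b : ℕ) (hq : 1 ≤ q)
    (hab : a < b)
    (A : Fin N → Fin N → ℝ) (hA : ∀ i j, 0 ≤ A i j) (hAs : ∀ i j, A i j = A j i)
    (d : Fin N → ℝ) (hd : ∀ i, 0 ≤ d i)
    (x : Fin N → Fin q → ℝ) :
    ∑ i, ∑ k, x i k *
        ((∑ j, A i j * spow (x i k - x j k) ((2 * (b : ℝ) - a) / b)) +
          d i * spow (x i k) ((2 * (b : ℝ) - a) / b)) ≥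
      (1 / 2) * ((q : ℝ) * ((N : ℝ) + 1) ^ 2) ^ (((a : ℝ) - b) / (2 * b)) *
        (2 * ((1 / 2) * (∑ i, ∑ j,
            A i j ^ (2 * (b : ℝ) / (3 * (b : ℝ) - a)) * (∑ k, (x i k - x j k) ^ 2)) +
          ∑ i, d i ^ (2 * (b : ℝ) / (3 * (b : ℝ) - a)) * (∑ k, (x i k) ^ 2))) ^
          ((3 * (b : ℝ) - a) / (2 * b)) := by
  have hab' : (a : ℝ) < b := by exact_mod_cast hab
  have hb : (0 : ℝ) < b := a.cast_nonneg.trans_lt hab'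
  have hr : 1 ≤ (3 * (b : ℝ) - a) / (2 * b) := by rw [le_div_iff₀ (by positivity)]; linarith
  have hp : (2 * (b : ℝ) - a) / b + 1 = 2 * ((3 * (b : ℝ) - a) / (2 * b)) := by
    field_simp; ring
  have hexp : ((a : ℝ) - b) / (2 * b) = 1 - (3 * (b : ℝ) - a) / (2 * b) := by field_simp; ring
  have her : 2 * (b : ℝ) / (3 * (b : ℝ) - a) * ((3 * (b : ℝ) - a) / (2 * b)) = 1 := by
    rw [div_mul_div_comm, mul_comm]
    exact div_self (by nlinarith)
  set p := (2 * (b : ℝ) - a) / b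
  set e := 2 * (b : ℝ) / (3 * (b : ℝ) - a)
  set r := (3 * (b : ℝ) - a) / (2 * b)
  have hpow (c : ℝ) (hc : 0 ≤ c) : (c ^ e) ^ r = c := by
    rw [← Real.rpow_mul hc, her, Real.rpow_one]
  have key := rpow_mul_rpow_sum_le_sum_rpow (s := univ)
    (fun m _ => pinnedTerms_nonneg (fun i j => Real.rpow_nonneg (hA i j) e)
      (fun i => Real.rpow_nonneg (hd i) e) x m) hr
    (by simpa using card_pinnedTerms_le (ι := Fin N) (κ := Fin q))
    (mul_pos (by exact_mod_cast hq) (by positivity))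
  rw [sum_pinnedTerms, sum_pinnedTerms_rpow (fun i j => Real.rpow_nonneg (hA i j) e)
    (fun i => Real.rpow_nonneg (hd i) e)] at key
  rw [ge_iff_le, sum_mul_laplacian_add_pinning hAs (spow_odd p), hexp,
    show ∀ X Y : ℝ, 2 * (1 / 2 * X + Y) = X + 2 * Y from fun X Y => by ring]
  simp only [mul_spow_self_s13 _ (by linarith : p + 1 ≠ 0), hp, hpow _ (hA _ _), hpow _ (hd _)]
    at key ⊢
  linarith

theorem stmt_13 (N q a b : ℕ) (hN : 1 ≤ N) (hq : 1 ≤ q)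
    (ha : Odd a) (hb : Odd b) (ha0 : 0 < a) (hab : a < b)
    (A : Fin N → Fin N → ℝ) (hA : ∀ i j, 0 ≤ A i j) (hAs : ∀ i j, A i j = A j i)
    (d : Fin N → ℝ) (hd : ∀ i, 0 ≤ d i)
    (x : Fin N → Fin q → ℝ) :
    ∑ i, ∑ k, x i k *
        ((∑ j, A i j * spow (x i k - x j k) ((2 * (b : ℝ) - a) / b)) +
          d i * spow (x i k) ((2 * (b : ℝ) - a) / b)) ≥
      (1 / 2) * ((q : ℝ) * ((N : ℝ) + 1) ^ 2) ^ (((a : ℝ) - b) / (2 * b)) *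
        (2 * ((1 / 2) * (∑ i, ∑ j,
            A i j ^ (2 * (b : ℝ) / (3 * (b : ℝ) - a)) * (∑ k, (x i k - x j k) ^ 2)) +
          ∑ i, d i ^ (2 * (b : ℝ) / (3 * (b : ℝ) - a)) * (∑ k, (x i k) ^ 2))) ^
          ((3 * (b : ℝ) - a) / (2 * b)) :=
  stmt_13_general N q a b hq hab A hA hAs d hd x
end

section
/- Let κ, η, C > 0, let N ≥ 1 be a real number, let ϖ ∈ (0,1), let t_o ≥ 0, and let y : [t_o, ∞) → ℝ be nonnegative and differentiable with y′(t) ≤ −κ·y(t)^{3/4} − (η/N)·y(t)² + C for all t ≥ t_o. Then for every t ≥ t_o + max{4/κ + N/(η(1−ϖ)), 4/(κ(1−ϖ)) + N/η}, one has y(t) ≤ min{(N·C/(ϖ·η))^{1/2}, (C/(ϖ·κ))^{4/3}}. -/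
open Set

/-- Key fixed-time convergence lemma: if `y` is nonnegative, differentiable, and
satisfies `y' ≤ -a y^(3/4) - b y^2` whenever `y > A`, then `y t ≤ A` for all
`t ≥ t_o + (4/a + 1/b)`. -/
lemma key_lemma (a b A t_o : ℝ) (ha : 0 < a) (hb : 0 < b) (hA : 0 < A)
    (y : ℝ → ℝ)
    (hdiff : ∀ t : ℝ, t_o ≤ t → DifferentiableAt ℝ y t)
    (hy' : ∀ t : ℝ, t_o ≤ t → A < y t →
      deriv y t ≤ -a * y t ^ ((3 : ℝ) / 4) - b * y t ^ 2) :
    ∀ t : ℝ, t_o + (4 / a + 1 / b) ≤ t → y t ≤ A := by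
  intro t₁ ht₁
  by_contra hcon
  push_neg at hcon
  have hT : 0 < 4 / a + 1 / b := by positivity
  have hto1 : t_o ≤ t₁ := by linarith
  have hcont : ContinuousOn y (Icc t_o t₁) := fun s hs =>
    (hdiff s hs.1).continuousAt.continuousWithinAt
  -- Step 1 : y > A on the whole interval
  have step1 : ∀ s ∈ Icc t_o t₁, A < y s := by
    by_contra hstep
    push_neg at hstep
    obtain ⟨s₀, hs₀, hys₀⟩ := hstep
    set S : Set ℝ := Icc t_o t₁ ∩ y ⁻¹' (Iic A) with hS
    have hSclosed : IsClosed S :=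
      hcont.preimage_isClosed_of_isClosed isClosed_Icc isClosed_Iic
    have hSsub : S ⊆ Icc t_o t₁ := inter_subset_left
    have hScomp : IsCompact S := isCompact_Icc.of_isClosed_subset hSclosed hSsub
    have hSne : S.Nonempty := ⟨s₀, hs₀, hys₀⟩
    set s' := sSup S with hs'
    have hs'S : s' ∈ S := hScomp.sSup_mem hSne
    have hs'I : s' ∈ Icc t_o t₁ := hSsub hs'S
    have hs'A : y s' ≤ A := hs'S.2
    have hs'lt : s' < t₁ := lt_of_le_of_ne hs'I.2 (fun h => by
      rw [h] at hs'A; linarith)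
    have hbdd : BddAbove S := hScomp.bddAbove
    have hgt : ∀ s, s' < s → s ≤ t₁ → A < y s := by
      intro s h1 h2
      by_contra h3
      push_neg at h3
      have : s ∈ S := ⟨⟨le_trans hs'I.1 h1.le, h2⟩, h3⟩
      exact absurd (le_csSup hbdd this) (not_le.mpr h1)
    have hanti : StrictAntiOn y (Icc s' t₁) := by
      apply strictAntiOn_of_deriv_neg (convex_Icc _ _)
        (hcont.mono (Icc_subset_Icc hs'I.1 le_rfl))
      intro s hs
      rw [interior_Icc] at hs
      have hsI : t_o ≤ s := le_trans hs'I.1 hs.1.le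
      have hAs : A < y s := hgt s hs.1 hs.2.le
      have hd := hy' s hsI hAs
      have h34 : 0 < y s ^ ((3 : ℝ) / 4) := Real.rpow_pos_of_pos (lt_trans hA hAs) _
      nlinarith [sq_nonneg (y s), lt_trans hA hAs]
    have := hanti ⟨le_rfl, hs'lt.le⟩ ⟨hs'lt.le, le_rfl⟩ hs'lt
    linarith
  have hpos : ∀ s ∈ Icc t_o t₁, 0 < y s := fun s hs => lt_trans hA (step1 s hs)
  have hd : ∀ s ∈ Icc t_o t₁, deriv y s ≤ -a * y s ^ ((3 : ℝ) / 4) - b * y s ^ 2 :=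
    fun s hs => hy' s hs.1 (step1 s hs)
  -- antitone functional for phase 1 : u s = -(y s)⁻¹ + b s on any subinterval
  have hu_anti : ∀ t₂ ∈ Icc t_o t₁, AntitoneOn (fun s => -(y s)⁻¹ + b * s) (Icc t_o t₂) := by
    intro t₂ ht₂
    have hsub : Icc t_o t₂ ⊆ Icc t_o t₁ := Icc_subset_Icc le_rfl ht₂.2
    have hderiv : ∀ s ∈ Icc t_o t₁,
        HasDerivAt (fun s => -(y s)⁻¹ + b * s) (-(-(deriv y s) / y s ^ 2) + b) s := by
      intro s hs
      have h1 : HasDerivAt y (deriv y s) s := (hdiff s hs.1).hasDerivAt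
      have h2 := (h1.inv (ne_of_gt (hpos s hs))).neg
      have h3 : HasDerivAt (fun s : ℝ => b * s) b s := by
        simpa using (hasDerivAt_id s).const_mul b
      exact h2.add h3
    apply antitoneOn_of_deriv_nonpos (convex_Icc _ _)
    · apply ContinuousOn.add
      · exact ((hcont.mono hsub).inv₀ (fun s hs => ne_of_gt (hpos s (hsub hs)))).neg
      · exact (continuous_const.mul continuous_id).continuousOn
    · intro s hs
      rw [interior_Icc] at hs
      have hs' : s ∈ Icc t_o t₁ := hsub ⟨hs.1.le, hs.2.le⟩
      exact (hderiv s hs').differentiableAt.differentiableWithinAt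
    · intro s hs
      rw [interior_Icc] at hs
      have hs' : s ∈ Icc t_o t₁ := hsub ⟨hs.1.le, hs.2.le⟩
      rw [(hderiv s hs').deriv]
      have hys := hpos s hs'
      have hdd := hd s hs'
      have h34 : 0 < y s ^ ((3 : ℝ) / 4) := Real.rpow_pos_of_pos hys _
      have hle : deriv y s ≤ -b * y s ^ 2 := by nlinarith
      have hy2 : 0 < y s ^ 2 := by positivity
      have : deriv y s / y s ^ 2 ≤ -b := by
        rw [div_le_iff₀ hy2]; nlinarith
      have hrw : -(-(deriv y s) / y s ^ 2) + b = deriv y s / y s ^ 2 + b := by ring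
      rw [hrw]; linarith
  -- split on whether y ever dips to ≤ 1
  set S₁ : Set ℝ := Icc t_o t₁ ∩ y ⁻¹' (Iic 1) with hS₁
  by_cases hne : S₁.Nonempty
  · -- s₁ := first time y ≤ 1
    have hSclosed : IsClosed S₁ :=
      hcont.preimage_isClosed_of_isClosed isClosed_Icc isClosed_Iic
    have hSsub : S₁ ⊆ Icc t_o t₁ := inter_subset_left
    have hScomp : IsCompact S₁ := isCompact_Icc.of_isClosed_subset hSclosed hSsub
    set s₁ := sInf S₁ with hs₁def
    have hs₁S : s₁ ∈ S₁ := hScomp.sInf_mem hne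
    have hs₁I : s₁ ∈ Icc t_o t₁ := hSsub hs₁S
    have hs₁le1 : y s₁ ≤ 1 := hs₁S.2
    have hbddb : BddBelow S₁ := hScomp.bddBelow
    -- phase 1 bound : b * (s₁ - t_o) ≤ 1
    have phase1 : b * (s₁ - t_o) ≤ 1 := by
      rcases eq_or_lt_of_le hs₁I.1 with heq | hlt
      · rw [← heq]; simp
      · -- y > 1 strictly before s₁
        have hgt1 : ∀ s ∈ Ioo t_o s₁, 1 < y s := by
          intro s hs
          by_contra h3
          push_neg at h3
          have : s ∈ S₁ := ⟨⟨hs.1.le, le_trans hs.2.le hs₁I.2⟩, h3⟩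
          exact absurd (csInf_le hbddb this) (not_le.mpr hs.2)
        -- y s₁ = 1 by continuity from the left
        have hy1 : 1 ≤ y s₁ := by
          have hclo : s₁ ∈ closure (Ioo t_o s₁) := by
            rw [closure_Ioo (ne_of_lt hlt)]; exact ⟨hlt.le, le_rfl⟩
          have hNB : (nhdsWithin s₁ (Ioo t_o s₁)).NeBot :=
            mem_closure_iff_nhdsWithin_neBot.mp hclo
          have htend : Filter.Tendsto y (nhdsWithin s₁ (Ioo t_o s₁)) (nhds (y s₁)) :=
            ((hdiff s₁ hs₁I.1).continuousAt.continuousWithinAt :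
              ContinuousWithinAt y (Ioo t_o s₁) s₁)
          exact ge_of_tendsto htend
            (Filter.eventually_of_mem self_mem_nhdsWithin (fun s hs => (hgt1 s hs).le))
        have hys₁1 : y s₁ = 1 := le_antisymm hs₁le1 hy1
        have := hu_anti s₁ hs₁I ⟨le_rfl, hs₁I.1⟩ ⟨hs₁I.1, le_rfl⟩ hs₁I.1
        simp only at this
        -- -(y s₁)⁻¹ + b s₁ ≤ -(y t_o)⁻¹ + b t_o
        have hyto : 0 < y t_o := hpos t_o ⟨le_rfl, hto1⟩
        have h1 : (0:ℝ) < (y t_o)⁻¹ := by positivity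
        rw [hys₁1] at this
        norm_num at this
        linarith
    -- phase 2 : (a/4) * (t₁ - s₁) < 1
    have phase2 : a / 4 * (t₁ - s₁) < 1 := by
      have hsub : Icc s₁ t₁ ⊆ Icc t_o t₁ := Icc_subset_Icc hs₁I.1 le_rfl
      have hderiv : ∀ s ∈ Icc t_o t₁,
          HasDerivAt (fun s => y s ^ ((1:ℝ)/4) + a / 4 * s)
            (deriv y s * ((1:ℝ)/4) * y s ^ ((1:ℝ)/4 - 1) + a / 4) s := by
        intro s hs
        have h1 : HasDerivAt y (deriv y s) s := (hdiff s hs.1).hasDerivAt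
        have h2 := h1.rpow_const (p := (1:ℝ)/4) (Or.inl (ne_of_gt (hpos s hs)))
        have h3 : HasDerivAt (fun s : ℝ => a / 4 * s) (a / 4) s := by
          simpa using (hasDerivAt_id s).const_mul (a / 4)
        exact h2.add h3
      have hanti : AntitoneOn (fun s => y s ^ ((1:ℝ)/4) + a / 4 * s) (Icc s₁ t₁) := by
        apply antitoneOn_of_deriv_nonpos (convex_Icc _ _)
        · apply ContinuousOn.add
          · exact (hcont.mono hsub).rpow_const
              (fun s hs => Or.inl (ne_of_gt (hpos s (hsub hs))))
          · exact (continuous_const.mul continuous_id).continuousOn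
        · intro s hs
          rw [interior_Icc] at hs
          have hs' : s ∈ Icc t_o t₁ := hsub ⟨hs.1.le, hs.2.le⟩
          exact (hderiv s hs').differentiableAt.differentiableWithinAt
        · intro s hs
          rw [interior_Icc] at hs
          have hs' : s ∈ Icc t_o t₁ := hsub ⟨hs.1.le, hs.2.le⟩
          rw [(hderiv s hs').deriv]
          have hys := hpos s hs'
          have hdd := hd s hs'
          have h34 : 0 < y s ^ ((3 : ℝ) / 4) := Real.rpow_pos_of_pos hys _
          have hm : 0 < y s ^ ((1:ℝ)/4 - 1) := Real.rpow_pos_of_pos hys _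
          have hprod : y s ^ ((3:ℝ)/4) * y s ^ ((1:ℝ)/4 - 1) = 1 := by
            rw [← Real.rpow_add hys]; norm_num
          have hle : deriv y s ≤ -a * y s ^ ((3:ℝ)/4) := by nlinarith
          have : deriv y s * ((1:ℝ)/4) * y s ^ ((1:ℝ)/4 - 1) ≤
              -a * y s ^ ((3:ℝ)/4) * ((1:ℝ)/4) * y s ^ ((1:ℝ)/4 - 1) := by
            apply mul_le_mul_of_nonneg_right _ hm.le
            linarith
          have heq : -a * y s ^ ((3:ℝ)/4) * ((1:ℝ)/4) * y s ^ ((1:ℝ)/4 - 1) = -(a/4) := by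
            have : -a * y s ^ ((3:ℝ)/4) * ((1:ℝ)/4) * y s ^ ((1:ℝ)/4 - 1)
                = -(a/4) * (y s ^ ((3:ℝ)/4) * y s ^ ((1:ℝ)/4 - 1)) := by ring
            rw [this, hprod]; ring
          rw [heq] at this
          linarith
      have := hanti ⟨le_rfl, hs₁I.2⟩ ⟨hs₁I.2, le_rfl⟩ hs₁I.2
      simp only at this
      have ht₁pos : 0 < y t₁ := hpos t₁ ⟨hto1, le_rfl⟩
      have h14 : 0 < y t₁ ^ ((1:ℝ)/4) := Real.rpow_pos_of_pos ht₁pos _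
      have hle1 : y s₁ ^ ((1:ℝ)/4) ≤ 1 :=
        Real.rpow_le_one (hpos s₁ hs₁I).le hs₁le1 (by norm_num)
      linarith
    -- combine
    have h1 : s₁ - t_o ≤ 1 / b := by
      rw [le_div_iff₀ hb]; linarith
    have h2 : t₁ - s₁ < 4 / a := by
      rw [lt_div_iff₀ ha]; nlinarith
    linarith
  · -- y > 1 on the whole interval
    have hgt1 : ∀ s ∈ Icc t_o t₁, 1 < y s := by
      intro s hs
      by_contra h3
      push_neg at h3
      exact hne ⟨s, hs, h3⟩
    have := hu_anti t₁ ⟨hto1, le_rfl⟩ ⟨le_rfl, hto1⟩ ⟨hto1, le_rfl⟩ hto1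
    simp only at this
    have hyto : 1 < y t_o := hgt1 t_o ⟨le_rfl, hto1⟩
    have hyt₁ : 1 < y t₁ := hgt1 t₁ ⟨hto1, le_rfl⟩
    have h1 : (0:ℝ) < (y t_o)⁻¹ := by positivity
    have h2 : (y t₁)⁻¹ < 1 := by
      rw [inv_lt_one_iff₀]; right; exact hyt₁
    have h4a : 0 < 4 / a := by positivity
    have : b * (t₁ - t_o) < 1 := by nlinarith
    have : t₁ - t_o < 1 / b := by rw [lt_div_iff₀ hb]; linarith
    linarith

theorem stmt_15 (κ η C N ϖ t_o : ℝ) (hκ : 0 < κ) (hη : 0 < η) (hC : 0 < C)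
    (hN : 1 ≤ N) (hϖ0 : 0 < ϖ) (hϖ1 : ϖ < 1) (hto : 0 ≤ t_o)
    (y : ℝ → ℝ)
    (hynn : ∀ t : ℝ, t_o ≤ t → 0 ≤ y t)
    (hdiff : ∀ t : ℝ, t_o ≤ t → DifferentiableAt ℝ y t)
    (hy' : ∀ t : ℝ, t_o ≤ t →
      deriv y t ≤ -κ * y t ^ ((3 : ℝ) / 4) - (η / N) * y t ^ 2 + C) :
    ∀ t : ℝ,
      t_o + max (4 / κ + N / (η * (1 - ϖ))) (4 / (κ * (1 - ϖ)) + N / η) ≤ t →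
      y t ≤ min ((N * C / (ϖ * η)) ^ ((1 : ℝ) / 2)) ((C / (ϖ * κ)) ^ ((4 : ℝ) / 3)) := by
  intro t ht
  have hN0 : (0:ℝ) < N := lt_of_lt_of_le one_pos hN
  have hϖ' : 0 < 1 - ϖ := by linarith
  refine le_min ?_ ?_
  · -- bound A = (N C / (ϖ η))^(1/2), via a = κ, b = (1-ϖ)η/N
    set X := N * C / (ϖ * η) with hX
    have hXpos : 0 < X := by positivity
    have hApos : 0 < X ^ ((1:ℝ)/2) := Real.rpow_pos_of_pos hXpos _
    apply key_lemma κ ((1 - ϖ) * η / N) (X ^ ((1:ℝ)/2)) t_o hκ (by positivity) hApos y hdiff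
    · intro s hs hAs
      have hys : 0 < y s := lt_trans hApos hAs
      have hsq : X < y s ^ 2 := by
        have := mul_self_lt_mul_self hApos.le hAs
        calc X = X ^ ((1:ℝ)/2) * X ^ ((1:ℝ)/2) := by
                rw [← Real.rpow_add hXpos]; norm_num
          _ < y s * y s := this
          _ = y s ^ 2 := (sq (y s)).symm
      have hCle : C < ϖ * (η / N) * y s ^ 2 := by
        have h2 : ϖ * (η / N) * X = C := by
          rw [hX]; field_simp
        calc C = ϖ * (η / N) * X := h2.symm
          _ < ϖ * (η / N) * y s ^ 2 := by
              apply mul_lt_mul_of_pos_left hsq (by positivity)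
      have := hy' s hs
      have hend : -(η / N) * y s ^ 2 + C ≤ -((1 - ϖ) * η / N) * y s ^ 2 := by
        have : (η / N) = (1 - ϖ) * η / N + ϖ * (η / N) := by field_simp; ring
        nlinarith
      linarith
    · -- time bound
      have hmax : 4 / κ + N / (η * (1 - ϖ)) ≤
          max (4 / κ + N / (η * (1 - ϖ))) (4 / (κ * (1 - ϖ)) + N / η) := le_max_left _ _
      have heq : 1 / ((1 - ϖ) * η / N) = N / (η * (1 - ϖ)) := by
        rw [mul_comm (1 - ϖ) η, one_div, inv_div]
      rw [heq]
      linarith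
  · -- bound B = (C/(ϖ κ))^(4/3), via a = (1-ϖ)κ, b = η/N
    set X := C / (ϖ * κ) with hX
    have hXpos : 0 < X := by positivity
    have hBpos : 0 < X ^ ((4:ℝ)/3) := Real.rpow_pos_of_pos hXpos _
    apply key_lemma ((1 - ϖ) * κ) (η / N) (X ^ ((4:ℝ)/3)) t_o (by positivity)
      (by positivity) hBpos y hdiff
    · intro s hs hBs
      have hys : 0 < y s := lt_trans hBpos hBs
      have h34 : X < y s ^ ((3:ℝ)/4) := by
        have h1 : (X ^ ((4:ℝ)/3)) ^ ((3:ℝ)/4) < y s ^ ((3:ℝ)/4) :=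
          Real.rpow_lt_rpow hBpos.le hBs (by norm_num)
        rwa [← Real.rpow_mul hXpos.le,
          show ((4:ℝ)/3 * (3/4)) = 1 by norm_num, Real.rpow_one] at h1
      have hCle : C < ϖ * κ * y s ^ ((3:ℝ)/4) := by
        have h2 : ϖ * κ * X = C := by rw [hX]; field_simp
        calc C = ϖ * κ * X := h2.symm
          _ < ϖ * κ * y s ^ ((3:ℝ)/4) := by
              apply mul_lt_mul_of_pos_left h34 (by positivity)
      have := hy' s hs
      nlinarith
    · have hmax : 4 / (κ * (1 - ϖ)) + N / η ≤
          max (4 / κ + N / (η * (1 - ϖ))) (4 / (κ * (1 - ϖ)) + N / η) := le_max_right _ _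
      have heq1 : 4 / ((1 - ϖ) * κ) = 4 / (κ * (1 - ϖ)) := by rw [mul_comm]
      have heq2 : 1 / (η / N) = N / η := by field_simp
      rw [heq1, heq2]
      linarith
end
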